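/- arXiv:1902.02213 — 5 statements merged into one kernel-verified Lean document; each statement's English description precedes it below -/
import Mathlib

section
/- Let π ∈ S_n and let Γ(π) = (d,l). Then π avoids both vincular patterns 1-3̲2̲ and 1-2̲3̲ if and only if the bicolored Motzkin path d has no horizontal steps of color c₂ and, for every index i, l_i > 0 implies that d_i is a down step. -/
open scoped Classical

noncomputable section

/-- Steps of a Motzkin path: up, down, horizontal. -/
inductive Step : Type
  | U : Step
  | D : Step
  | H : Step
  deriving DecidableEq

/-- Steps of a bicolored Motzkin path: up, down, horizontal of color `c₁`,
horizontal of color `c₂`. -/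
inductive CStep : Type
  | U : CStep
  | D : CStep
  | H : CStep
  | Ht : CStep
  deriving DecidableEq

/-- A word over `{U,D,H}` is a Motzkin word if the numbers of `U`'s and `D`'s agree
and every prefix has at least as many `U`'s as `D`'s. -/
def IsMotzkin (w : List Step) : Prop :=
  w.count Step.U = w.count Step.D ∧
  ∀ k, (w.take k).count Step.D ≤ (w.take k).count Step.U

/-- The `y`-coordinate of the lattice point reached after the first `i` steps. -/
def levelAt (w : List Step) (i : ℕ) : ℕ :=
  (w.take i).count Step.U - (w.take i).count Step.D

/-- The height of the `i`-th step (0-indexed): the `y`-coordinate of its ending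
point for a down step, of its starting point otherwise. -/
def heightAt (w : List Step) (i : ℕ) : ℕ :=
  if w.getD i Step.H = Step.D then levelAt w (i + 1) else levelAt w i

/-- Twice the area between the path and the `x`-axis (trapezoid rule). -/
def twoArea (w : List Step) : ℕ :=
  ∑ i ∈ Finset.range w.length, (levelAt w i + levelAt w (i + 1))

/-- The number of occurrences of `p` as a factor (subword of consecutive letters) of `w`. -/
def occFactor (p w : List Step) : ℕ :=
  ((Finset.range w.length).filter fun i => p <+: w.drop i).card

/-- The `y`-coordinate reached after `i` steps, bicolored version. -/
def cLevelAt (w : List CStep) (i : ℕ) : ℕ :=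
  (w.take i).count CStep.U - (w.take i).count CStep.D

/-- The height of the `i`-th step, bicolored version. -/
def cHeightAt (w : List CStep) (i : ℕ) : ℕ :=
  if w.getD i CStep.H = CStep.D then cLevelAt w (i + 1) else cLevelAt w i

/-- A bicolored Motzkin word: a Motzkin word whose horizontal steps have two possible
colors (`H` and `Ht`), horizontal steps at height `0` not being allowed to have the
second color. -/
def IsBicoloredMotzkin (w : List CStep) : Prop :=
  w.count CStep.U = w.count CStep.D ∧
  (∀ k, (w.take k).count CStep.D ≤ (w.take k).count CStep.U) ∧
  (∀ i < w.length, w.getD i CStep.H = CStep.Ht → cHeightAt w i ≠ 0)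

/-- A histoire de Laguerre of length `n`: a bicolored Motzkin path of length `n`
together with a sequence `l` of nonnegative integers such that `l i ≤ h i` for each
step, the inequality being strict for the horizontal steps of the second color
(the "suitable constraints" of De Medicis and Viennot). -/
def IsLaguerre (n : ℕ) (dl : List CStep × List ℕ) : Prop :=
  dl.1.length = n ∧ dl.2.length = n ∧ IsBicoloredMotzkin dl.1 ∧
  ∀ i < n, dl.2.getD i 0 ≤ cHeightAt dl.1 i ∧
    (dl.1.getD i CStep.H = CStep.Ht → dl.2.getD i 0 < cHeightAt dl.1 i)

/-- A labelled Motzkin path of length `n`: a Motzkin path whose down steps carry a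
label not exceeding their height, all other steps carrying the label `0` (unlabelled). -/
def IsLabelledMotzkin (n : ℕ) (dl : List Step × List ℕ) : Prop :=
  dl.1.length = n ∧ dl.2.length = n ∧ IsMotzkin dl.1 ∧
  ∀ i < n, (dl.1.getD i Step.H = Step.D → dl.2.getD i 0 ≤ heightAt dl.1 i) ∧
    (dl.1.getD i Step.H ≠ Step.D → dl.2.getD i 0 = 0)

/-- The embedding of plain Motzkin steps into bicolored steps. -/
def Step.toC : Step → CStep
  | Step.U => CStep.U
  | Step.D => CStep.D
  | Step.H => CStep.H

/-- The value (as a natural number, 0-indexed) of the permutation `π` at the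
(0-indexed) position `i`; junk value `0` out of range. -/
def pv {n : ℕ} (π : Equiv.Perm (Fin n)) (i : ℕ) : ℕ :=
  if h : i < n then (π ⟨i, h⟩ : Fin n).val else 0

/-- Position `p` starts an ascending run of `π` (in one-line notation):
either `p = 0` or there is a descent just before `p`. -/
def RunStartAt {n : ℕ} (π : Equiv.Perm (Fin n)) (p : Fin n) : Prop :=
  ∀ q : Fin n, (q : ℕ) + 1 = (p : ℕ) → π p < π q

/-- Position `p` ends an ascending run of `π`. -/
def RunEndAt {n : ℕ} (π : Equiv.Perm (Fin n)) (p : Fin n) : Prop :=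
  ∀ q : Fin n, (p : ℕ) + 1 = (q : ℕ) → π q < π p

/-- The step of the bicolored Motzkin path `Γ(π)` associated with the value `v`:
`U` if `v` is a head, `D` if it is a tail, `H` if it is a head-tail, `Ht` if it
is a boarder. -/
def gammaStep {n : ℕ} (π : Equiv.Perm (Fin n)) (v : Fin n) : CStep :=
  if RunStartAt π (π.symm v) then
    if RunEndAt π (π.symm v) then CStep.H else CStep.U
  else
    if RunEndAt π (π.symm v) then CStep.D else CStep.Ht

/-- The label of `Γ(π)` at the value `v`: the number of ascending runs of `π`
(determined by the position `pq.1` of their first element and the position `pq.2`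
of their last element) whose first value is `< v`, whose last value is `> v`, and
whose last element precedes `v` in `π`. -/
def gammaLabel {n : ℕ} (π : Equiv.Perm (Fin n)) (v : Fin n) : ℕ :=
  (Finset.univ.filter fun pq : Fin n × Fin n =>
    RunStartAt π pq.1 ∧ RunEndAt π pq.2 ∧ pq.1 ≤ pq.2 ∧
    (∀ r : Fin n, pq.1 ≤ r → r < pq.2 → ¬ RunEndAt π r) ∧
    π pq.1 < v ∧ v < π pq.2 ∧ pq.2 < π.symm v).card

/-- The map `Γ` from permutations to pairs (bicolored Motzkin path, label sequence). -/
def Gamma {n : ℕ} (π : Equiv.Perm (Fin n)) : List CStep × List ℕ :=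
  (List.ofFn fun v => gammaStep π v, List.ofFn fun v => gammaLabel π v)

/-- The (uncolored) Motzkin path `Γ(π)` for permutations with no boarders:
`U` for heads, `D` for tails, `H` for head-tails. -/
def gammaPath {n : ℕ} (π : Equiv.Perm (Fin n)) : List Step :=
  List.ofFn fun v : Fin n =>
    if RunStartAt π (π.symm v) then
      if RunEndAt π (π.symm v) then Step.H else Step.U
    else
      if RunEndAt π (π.symm v) then Step.D else Step.H

/-- `π` is an involution. -/
def IsInvolution {n : ℕ} (π : Equiv.Perm (Fin n)) : Prop :=
  ∀ x, π (π x) = x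

/-- The Motzkin path `Ψ(π)` of an involution `π`: `H` at fixed points, `U` at the
smaller element of a 2-cycle, `D` at the larger element of a 2-cycle. -/
def psiWord {n : ℕ} (π : Equiv.Perm (Fin n)) : List Step :=
  List.ofFn fun v : Fin n =>
    if π v = v then Step.H else if v < π v then Step.U else Step.D

/-- The label of `Ψ(π)` at `v`: if `v` is the larger element of a 2-cycle
`(π v, v)`, the number of 2-cycles `(x, π x)` with `π v < x < v < π x`; `0` otherwise. -/
def psiLabel {n : ℕ} (π : Equiv.Perm (Fin n)) (v : Fin n) : ℕ :=
  if π v < v then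
    (Finset.univ.filter fun x : Fin n => π v < x ∧ x < v ∧ v < π x).card
  else 0

/-- The map `Ψ` from involutions to labelled Motzkin paths. -/
def Psi {n : ℕ} (π : Equiv.Perm (Fin n)) : List Step × List ℕ :=
  (psiWord π, List.ofFn fun v => psiLabel π v)

/-- Number of inversions of `π`. -/
def invCount {n : ℕ} (π : Equiv.Perm (Fin n)) : ℕ :=
  (Finset.univ.filter fun p : Fin n × Fin n => p.1 < p.2 ∧ π p.2 < π p.1).card

/-- Number of coinversions of `π`. -/
def coinvCount {n : ℕ} (π : Equiv.Perm (Fin n)) : ℕ :=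
  (Finset.univ.filter fun p : Fin n × Fin n => p.1 < p.2 ∧ π p.1 < π p.2).card

/-- Number of descents of `π`. -/
def desCount {n : ℕ} (π : Equiv.Perm (Fin n)) : ℕ :=
  ((Finset.range (n - 1)).filter fun i => pv π (i + 1) < pv π i).card

/-- Number of ascents of `π`. -/
def ascCount {n : ℕ} (π : Equiv.Perm (Fin n)) : ℕ :=
  ((Finset.range (n - 1)).filter fun i => pv π i < pv π (i + 1)).card

/-- Number of fixed points of `π`. -/
def fixCount {n : ℕ} (π : Equiv.Perm (Fin n)) : ℕ :=
  (Finset.univ.filter fun i : Fin n => π i = i).card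

/-- Number of occurrences of the consecutive pattern 123 in `π`. -/
def occC123 {n : ℕ} (π : Equiv.Perm (Fin n)) : ℕ :=
  ((Finset.range (n - 2)).filter fun i =>
    pv π i < pv π (i + 1) ∧ pv π (i + 1) < pv π (i + 2)).card

/-- Number of occurrences of the consecutive pattern 132 in `π`. -/
def occC132 {n : ℕ} (π : Equiv.Perm (Fin n)) : ℕ :=
  ((Finset.range (n - 2)).filter fun i =>
    pv π i < pv π (i + 2) ∧ pv π (i + 2) < pv π (i + 1)).card

/-- Number of occurrences of the consecutive pattern 213 in `π`. -/
def occC213 {n : ℕ} (π : Equiv.Perm (Fin n)) : ℕ :=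
  ((Finset.range (n - 2)).filter fun i =>
    pv π (i + 1) < pv π i ∧ pv π i < pv π (i + 2)).card

/-- Number of occurrences of the consecutive pattern 231 in `π`. -/
def occC231 {n : ℕ} (π : Equiv.Perm (Fin n)) : ℕ :=
  ((Finset.range (n - 2)).filter fun i =>
    pv π (i + 2) < pv π i ∧ pv π i < pv π (i + 1)).card

/-- Number of occurrences of the consecutive pattern 312 in `π`. -/
def occC312 {n : ℕ} (π : Equiv.Perm (Fin n)) : ℕ :=
  ((Finset.range (n - 2)).filter fun i =>
    pv π (i + 1) < pv π (i + 2) ∧ pv π (i + 2) < pv π i).card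

/-- Number of occurrences of the consecutive pattern 321 in `π`. -/
def occC321 {n : ℕ} (π : Equiv.Perm (Fin n)) : ℕ :=
  ((Finset.range (n - 2)).filter fun i =>
    pv π (i + 2) < pv π (i + 1) ∧ pv π (i + 1) < pv π i).card

/-- `π` contains the classical pattern 132. -/
def Contains132 {n : ℕ} (π : Equiv.Perm (Fin n)) : Prop :=
  ∃ i j k : Fin n, i < j ∧ j < k ∧ π i < π k ∧ π k < π j

/-- `π` contains the consecutive pattern 123. -/
def ContainsC123 {n : ℕ} (π : Equiv.Perm (Fin n)) : Prop :=
  ∃ i j k : Fin n, (i : ℕ) + 1 = (j : ℕ) ∧ (j : ℕ) + 1 = (k : ℕ) ∧ π i < π j ∧ π j < π k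

/-- `π` contains the classical pattern 3412. -/
def Contains3412 {n : ℕ} (π : Equiv.Perm (Fin n)) : Prop :=
  ∃ i₁ i₂ i₃ i₄ : Fin n, i₁ < i₂ ∧ i₂ < i₃ ∧ i₃ < i₄ ∧
    π i₃ < π i₄ ∧ π i₄ < π i₁ ∧ π i₁ < π i₂

/-- `π` contains the vincular pattern 1-2̲3̲. -/
def Contains1_23 {n : ℕ} (π : Equiv.Perm (Fin n)) : Prop :=
  ∃ i j k : Fin n, i < j ∧ (j : ℕ) + 1 = (k : ℕ) ∧ π i < π j ∧ π j < π k

/-- `π` contains the vincular pattern 1-3̲2̲. -/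
def Contains1_32 {n : ℕ} (π : Equiv.Perm (Fin n)) : Prop :=
  ∃ i j k : Fin n, i < j ∧ (j : ℕ) + 1 = (k : ℕ) ∧ π i < π k ∧ π k < π j

/-- `w` is the one-line notation of a permutation of `{0, …, n-1}`. -/
def IsPermWord (n : ℕ) (w : List ℕ) : Prop :=
  List.Perm w (List.range n)

/-- Position `p` starts an ascending run of the word `w`. -/
def wRunStart (w : List ℕ) (p : ℕ) : Prop :=
  p = 0 ∨ w.getD p 0 < w.getD (p - 1) 0

/-- Position `p` ends an ascending run of the word `w`. -/
def wRunEnd (w : List ℕ) (p : ℕ) : Prop :=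
  p + 1 = w.length ∨ w.getD (p + 1) 0 < w.getD p 0

/-- The step of `Γ(w)` associated with the value `v`. -/
def wGammaStep (w : List ℕ) (v : ℕ) : CStep :=
  if wRunStart w (w.idxOf v) then
    if wRunEnd w (w.idxOf v) then CStep.H else CStep.U
  else
    if wRunEnd w (w.idxOf v) then CStep.D else CStep.Ht

/-- The label of `Γ(w)` at the value `v`. -/
def wGammaLabel (w : List ℕ) (v : ℕ) : ℕ :=
  ((Finset.range w.length ×ˢ Finset.range w.length).filter fun pq =>
    wRunStart w pq.1 ∧ wRunEnd w pq.2 ∧ pq.1 ≤ pq.2 ∧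
    (∀ r, pq.1 ≤ r → r < pq.2 → ¬ wRunEnd w r) ∧
    w.getD pq.1 0 < v ∧ v < w.getD pq.2 0 ∧ pq.2 < w.idxOf v).card

/-- The map `Γ` on one-line words. -/
def wGamma (w : List ℕ) : List CStep × List ℕ :=
  ((List.range w.length).map (wGammaStep w), (List.range w.length).map (wGammaLabel w))

/-- The word `w` contains the vincular pattern 1-2̲3̲. -/
def wContains1_23 (w : List ℕ) : Prop :=
  ∃ i j, i < j ∧ j + 1 < w.length ∧
    w.getD i 0 < w.getD j 0 ∧ w.getD j 0 < w.getD (j + 1) 0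

/-- The word `w` contains the vincular pattern 1-3̲2̲. -/
def wContains1_32 (w : List ℕ) : Prop :=
  ∃ i j, i < j ∧ j + 1 < w.length ∧
    w.getD i 0 < w.getD (j + 1) 0 ∧ w.getD (j + 1) 0 < w.getD j 0

/-- The word `w` contains the classical pattern 132. -/
def wContains132 (w : List ℕ) : Prop :=
  ∃ i j k, i < j ∧ j < k ∧ k < w.length ∧
    w.getD i 0 < w.getD k 0 ∧ w.getD k 0 < w.getD j 0

/-- The word `w` contains the consecutive pattern 123. -/
def wContainsC123 (w : List ℕ) : Prop :=
  ∃ i, i + 2 < w.length ∧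
    w.getD i 0 < w.getD (i + 1) 0 ∧ w.getD (i + 1) 0 < w.getD (i + 2) 0

/-- The one-line word of the Foata image `F(π)` of an involution `π`: write `π` in
standard cycle notation (each cycle with its least element first, cycles in
decreasing order of their least elements) and erase the parentheses. -/
def foataWord {n : ℕ} (π : Equiv.Perm (Fin n)) : List ℕ :=
  (((List.range n).reverse).map fun m =>
    if pv π m = m then [m]
    else if m < pv π m then [m, pv π m]
    else ([] : List ℕ)).flatten

/-- The number of long tunnels of `d`: occurrences of factors `U α D` with `α` a
nonempty Motzkin word. -/
def longTunnelCount (d : List Step) : ℕ :=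
  ((Finset.range d.length ×ˢ Finset.range d.length).filter fun ij =>
    ij.1 + 1 < ij.2 ∧ d.getD ij.1 Step.H = Step.U ∧ d.getD ij.2 Step.H = Step.D ∧
    IsMotzkin ((d.drop (ij.1 + 1)).take (ij.2 - ij.1 - 1))).card

/-- The number of weak valleys of `d`: occurrences of the factors `HH, HU, DH, DU`. -/
def weakValleyCount (d : List Step) : ℕ :=
  occFactor [Step.H, Step.H] d + occFactor [Step.H, Step.U] d +
  occFactor [Step.D, Step.H] d + occFactor [Step.D, Step.U] d

end

/-!
A boarder `p` is the middle of an occurrence `π (p-1) < π p < π (p+1)` of 1-2̲3̲. Once boarders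
are excluded, every step other than `D` belongs to a value `π j` at the start `j` of a run, and
its label is positive exactly when some value before position `j` is smaller than `π j`. Such a
value, followed by the descent `π (j-1) > π j`, is an occurrence of 1-3̲2̲. Conversely, an
occurrence `π i < π (j+1) < π j` of 1-3̲2̲ puts a smaller value before the run start `j+1`, and an
occurrence `π i < π j < π (j+1)` of 1-2̲3̲ does so before `j` unless `j` is a boarder.
-/

section AscendingRuns

variable {n : ℕ} (π : Equiv.Perm (Fin n))

theorem runStartAt_iff_runEndAt {p q : Fin n} (hpq : (p : ℕ) + 1 = q) :
    RunStartAt π q ↔ RunEndAt π p := by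
  constructor
  · intro h r hr
    obtain rfl : r = q := by omega
    exact h p hpq
  · intro h r hr
    obtain rfl : r = p := by omega
    exact h q hpq

theorem exists_succ_of_not_runEndAt {p : Fin n} (h : ¬RunEndAt π p) :
    ∃ q : Fin n, (p : ℕ) + 1 = q ∧ π p < π q := by
  simp only [RunEndAt, not_forall, not_lt] at h
  obtain ⟨q, hpq, hle⟩ := h
  exact ⟨q, hpq, hle.lt_of_ne fun he => by simp [π.injective he] at hpq⟩

theorem exists_pred_of_not_runStartAt {p : Fin n} (h : ¬RunStartAt π p) :
    ∃ q : Fin n, (q : ℕ) + 1 = p ∧ π q < π p := by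
  simp only [RunStartAt, not_forall, not_lt] at h
  obtain ⟨q, hqp, hle⟩ := h
  exact ⟨q, hqp, hle.lt_of_ne fun he => by simp [π.injective he] at hqp⟩

theorem apply_le_apply_of_forall_not_runEndAt {a b : Fin n} (hab : a ≤ b)
    (hrun : ∀ r, a ≤ r → r < b → ¬RunEndAt π r) : π a ≤ π b := by
  obtain ⟨b, hb⟩ := b
  simp only [Fin.le_def] at hab ⊢
  induction b, hab using Nat.le_induction with
  | base => exact le_rfl
  | succ b hab ih =>
    have hb' : b < n := by omega
    obtain ⟨q, hq, hlt⟩ := exists_succ_of_not_runEndAt π (hrun ⟨b, hb'⟩ hab (by simp))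
    obtain rfl : q = ⟨b + 1, hb⟩ := by ext; simp [← hq]
    exact (ih hb' fun r har hrb => hrun r har (hrb.trans (by simp))).trans hlt.le

theorem exists_runStartAt_le (p : Fin n) :
    ∃ s ≤ p, RunStartAt π s ∧ ∀ r, s ≤ r → r < p → ¬RunEndAt π r := by
  have hfirst : RunStartAt π ⟨0, p.pos⟩ := fun q hq => by simp at hq
  obtain ⟨s, hs, hmax⟩ := Finset.exists_max_image
    (Finset.univ.filter fun s => s ≤ p ∧ RunStartAt π s) id
    ⟨_, Finset.mem_filter.2 ⟨Finset.mem_univ _, Fin.le_def.2 (Nat.zero_le _), hfirst⟩⟩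
  simp only [Finset.mem_filter, Finset.mem_univ, true_and, id] at hs hmax
  refine ⟨s, hs.1, hs.2, fun r hsr hrp hr => ?_⟩
  have := hmax ⟨r + 1, by omega⟩ ⟨Fin.le_def.2 hrp, (runStartAt_iff_runEndAt π rfl).2 hr⟩
  exact (Fin.le_def.1 this).not_gt (Nat.lt_succ_of_le hsr)

theorem exists_runEndAt_ge (p : Fin n) :
    ∃ t, p ≤ t ∧ RunEndAt π t ∧ ∀ r, p ≤ r → r < t → ¬RunEndAt π r := by
  have hlast : RunEndAt π ⟨n - 1, by have := p.isLt; omega⟩ := fun q hq =>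
    absurd q.isLt (show ¬(q : ℕ) < n by simp only at hq; omega)
  obtain ⟨t, ht, hmin⟩ := Finset.exists_min_image
    (Finset.univ.filter fun t => p ≤ t ∧ RunEndAt π t) id
    ⟨_, Finset.mem_filter.2
      ⟨Finset.mem_univ _, Fin.le_def.2 (show (p : ℕ) ≤ n - 1 by omega), hlast⟩⟩
  simp only [Finset.mem_filter, Finset.mem_univ, true_and, id] at ht hmin
  exact ⟨t, ht.1, ht.2, fun r hpr hrt hr => absurd (hmin r ⟨hpr, hr⟩) (not_le.2 hrt)⟩

theorem gammaStep_apply_eq_Ht_iff (p : Fin n) :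
    gammaStep π (π p) = CStep.Ht ↔ ¬RunStartAt π p ∧ ¬RunEndAt π p := by
  unfold gammaStep
  split_ifs <;> simp_all

theorem gammaStep_apply_eq_D_iff (p : Fin n) :
    gammaStep π (π p) = CStep.D ↔ ¬RunStartAt π p ∧ RunEndAt π p := by
  unfold gammaStep
  split_ifs <;> simp_all

theorem gammaLabel_apply_pos_iff (p : Fin n) :
    0 < gammaLabel π (π p) ↔ ∃ s t : Fin n, RunStartAt π s ∧ RunEndAt π t ∧ s ≤ t ∧
      (∀ r, s ≤ r → r < t → ¬RunEndAt π r) ∧ π s < π p ∧ π p < π t ∧ t < p := by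
  simp [gammaLabel, Finset.card_pos, Finset.filter_nonempty_iff]

theorem exists_lt_of_gammaLabel_apply_pos {p : Fin n} (h : 0 < gammaLabel π (π p)) :
    ∃ q < p, π q < π p := by
  obtain ⟨s, t, -, -, hst, -, hs, -, htp⟩ := (gammaLabel_apply_pos_iff π p).1 h
  exact ⟨s, hst.trans_lt htp, hs⟩

/-- The run through the last position before `j` whose value is below `π j` ends before `j`,
at a value above `π j`. -/
theorem gammaLabel_apply_pos_of_runStartAt {j p : Fin n} (hj : RunStartAt π j) (hpj : p < j)
    (hp : π p < π j) : 0 < gammaLabel π (π j) := by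
  obtain ⟨m, hm, hmax⟩ := Finset.exists_max_image
    (Finset.univ.filter fun q => q < j ∧ π q < π j) id
    ⟨p, Finset.mem_filter.2 ⟨Finset.mem_univ _, hpj, hp⟩⟩
  simp only [Finset.mem_filter, Finset.mem_univ, true_and, id] at hm hmax
  have above : ∀ q, m < q → q < j → π j < π q := fun q hmq hqj =>
    (le_of_not_gt fun h => absurd (hmax q ⟨hqj, h⟩) (not_le.2 hmq)).lt_of_ne
      fun h => hqj.ne (π.injective h).symm
  obtain ⟨s, hsm, hs, hsrun⟩ := exists_runStartAt_le π m
  obtain ⟨t, hmt, ht, htrun⟩ := exists_runEndAt_ge π m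
  have hjpred : RunEndAt π ⟨j - 1, by omega⟩ :=
    (runStartAt_iff_runEndAt π (show (j : ℕ) - 1 + 1 = j by omega)).1 hj
  have htj : t < j := by
    by_contra! hjt
    exact htrun _ (Fin.le_def.2 (show (m : ℕ) ≤ j - 1 by omega))
      (Fin.lt_def.2 (show (j : ℕ) - 1 < t by omega)) hjpred
  have hmt' : m < t := by
    refine hmt.lt_of_ne fun hmt => ?_
    subst hmt
    have hsucc : (m : ℕ) + 1 < j := (Nat.succ_le_of_lt htj).lt_of_ne fun h => (ht j h).not_gt hm.2
    exact (ht ⟨m + 1, hsucc.trans j.isLt⟩ rfl).not_gt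
      (hm.2.trans (above _ (Fin.lt_def.2 (Nat.lt_succ_self _)) (Fin.lt_def.2 hsucc)))
  refine (gammaLabel_apply_pos_iff π j).2 ⟨s, t, hs, ht, hsm.trans hmt, fun r hsr hrt => ?_,
    (apply_le_apply_of_forall_not_runEndAt π hsm hsrun).trans_lt hm.2, above t hmt' htj, htj⟩
  rcases lt_or_ge r m with hrm | hmr
  · exact hsrun r hsr hrm
  · exact htrun r hmr hrt

theorem contains1_23_of_gammaStep_eq_Ht {v : Fin n} (h : gammaStep π v = CStep.Ht) :
    Contains1_23 π := by
  obtain ⟨p, rfl⟩ := π.surjective v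
  obtain ⟨hs, he⟩ := (gammaStep_apply_eq_Ht_iff π p).1 h
  obtain ⟨q, hqp, hq⟩ := exists_pred_of_not_runStartAt π hs
  obtain ⟨r, hpr, hr⟩ := exists_succ_of_not_runEndAt π he
  exact ⟨q, p, r, by omega, hpr, hq, hr⟩

theorem contains1_32_of_runStartAt_of_gammaLabel_pos {p : Fin n} (hp : RunStartAt π p)
    (h : 0 < gammaLabel π (π p)) : Contains1_32 π := by
  obtain ⟨q, hqp, hq⟩ := exists_lt_of_gammaLabel_apply_pos π h
  have hpred : (q : ℕ) + 1 < p := (Nat.succ_le_of_lt hqp).lt_of_ne fun h => (hp q h).not_gt hq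
  have hp' : ((⟨p - 1, by omega⟩ : Fin n) : ℕ) + 1 = p := show (p : ℕ) - 1 + 1 = p by omega
  exact ⟨q, _, p, Fin.lt_def.2 (show (q : ℕ) < p - 1 by omega), hp', hq, hp _ hp'⟩

theorem exists_runStartAt_gammaLabel_pos_of_contains1_32 (h : Contains1_32 π) :
    ∃ j, RunStartAt π j ∧ 0 < gammaLabel π (π j) := by
  obtain ⟨i, j, k, hij, hjk, hik, hkj⟩ := h
  have hk : RunStartAt π k := (runStartAt_iff_runEndAt π hjk).2 fun q hq => by
    obtain rfl : q = k := by omega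
    exact hkj
  exact ⟨k, hk, gammaLabel_apply_pos_of_runStartAt π hk (hij.trans (by omega)) hik⟩

theorem exists_gammaStep_eq_Ht_or_runStartAt_gammaLabel_pos_of_contains1_23
    (h : Contains1_23 π) :
    (∃ v, gammaStep π v = CStep.Ht) ∨ ∃ j, RunStartAt π j ∧ 0 < gammaLabel π (π j) := by
  obtain ⟨i, j, k, hij, hjk, hij', hjk'⟩ := h
  by_cases hj : RunStartAt π j
  · exact .inr ⟨j, hj, gammaLabel_apply_pos_of_runStartAt π hj hij hij'⟩
  · refine .inl ⟨π j, (gammaStep_apply_eq_Ht_iff π j).2 ⟨hj, fun he => ?_⟩⟩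
    exact (he k hjk).not_gt hjk'

end AscendingRuns

/-- For `π ∈ S_n` with `Γ(π) = (d, l)`: `π` avoids both vincular
patterns 1-3̲2̲ and 1-2̲3̲ if and only if `d` has no horizontal steps of color `c₂` and
every index with a positive label is a down step. -/
theorem avoids_vincular_iff_gamma (n : ℕ) (π : Equiv.Perm (Fin n)) :
    (¬ Contains1_32 π ∧ ¬ Contains1_23 π) ↔
      ((∀ v : Fin n, gammaStep π v ≠ CStep.Ht) ∧
        (∀ v : Fin n, 0 < gammaLabel π v → gammaStep π v = CStep.D)) := by
  constructor
  · rintro ⟨h32, h23⟩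
    have hHt : ∀ v, gammaStep π v ≠ CStep.Ht := fun v hv =>
      h23 (contains1_23_of_gammaStep_eq_Ht π hv)
    refine ⟨hHt, fun v hv => ?_⟩
    obtain ⟨p, rfl⟩ := π.surjective v
    have hs : ¬RunStartAt π p := fun hs =>
      h32 (contains1_32_of_runStartAt_of_gammaLabel_pos π hs hv)
    have he : RunEndAt π p := by
      by_contra he
      exact hHt _ ((gammaStep_apply_eq_Ht_iff π p).2 ⟨hs, he⟩)
    exact (gammaStep_apply_eq_D_iff π p).2 ⟨hs, he⟩
  · rintro ⟨hHt, hD⟩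
    have hstart : ¬∃ j, RunStartAt π j ∧ 0 < gammaLabel π (π j) := fun ⟨j, hj, hpos⟩ =>
      ((gammaStep_apply_eq_D_iff π j).1 (hD _ hpos)).1 hj
    refine ⟨fun h => hstart (exists_runStartAt_gammaLabel_pos_of_contains1_32 π h),
      fun h => ?_⟩
    rcases exists_gammaStep_eq_Ht_or_runStartAt_gammaLabel_pos_of_contains1_23 π h with
      ⟨v, hv⟩ | hj
    · exact hHt v hv
    · exact hstart hj
end

section
/- The Foata map F restricts to a bijection from the set I_n(3412) of involutions of length n avoiding the classical pattern 3412 onto the set S_n(132, 1̲2̲3̲) of permutations avoiding the classical pattern 132 and the consecutive pattern 123. -/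
open scoped Classical

/-!
Write `c v = min v (π v)` for the least element of the cycle of `v` under an involution `π`.
The Foata word of `π` lists `0, …, n-1` by decreasing `c`, increasingly within a cycle, and it
is the only word sorted in this way. In such a word the ascents are exactly the 2-cycles of `π`,
each written as two adjacent letters; so `π` can be read back off the word, and the word has no
consecutive `123`. A `132` pattern `x z y` in it arises exactly from the crossing 2-cycles
`(c z, z)` and `(c y, y)`, and a `3412` in an involution amounts to such a crossing.

Conversely, a `132`- and `123`-avoiding word pairs the letters of each ascent into a 2-cycle.
For the resulting involution, `c` is constant across an ascent and drops across a descent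
(after an ascent `w (p-1) < w p > w (p+1)`, avoiding `132` forces `w (p+1) < w (p-1)`), so the
word is sorted and is therefore the Foata word.
-/

namespace List

variable {α : Type*} {r : α → α → Prop} {w : List α}

theorem Pairwise.rel_getD (hs : w.Pairwise r) {i j : ℕ} (hij : i < j) (hj : j < w.length)
    (d : α) : r (w.getD i d) (w.getD j d) := by
  rw [getD_eq_getElem _ _ (hij.trans hj), getD_eq_getElem _ _ hj]
  exact pairwise_iff_getElem.1 hs i j _ hj hij

theorem Pairwise.idxOf_lt_idxOf_iff [BEq α] [LawfulBEq α] (hr : ∀ a b, r a b → ¬ r b a)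
    (hs : w.Pairwise r) {u v : α} (hu : u ∈ w) (hv : v ∈ w) :
    w.idxOf u < w.idxOf v ↔ r u v := by
  have key : ∀ {a b}, a ∈ w → b ∈ w → w.idxOf a < w.idxOf b → r a b := by
    intro a b ha hb hab
    simpa [getD_eq_getElem, idxOf_lt_length_iff.2 ha, idxOf_lt_length_iff.2 hb]
      using hs.rel_getD hab (idxOf_lt_length_iff.2 hb) u
  refine ⟨key hu hv, fun huv => ?_⟩
  rcases lt_trichotomy (w.idxOf u) (w.idxOf v) with h | h | h
  · exact h
  · obtain rfl := (idxOf_inj hu).1 h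
    exact absurd huv (hr u u huv)
  · exact absurd (key hv hu h) (hr u v huv)

end List

variable {n : ℕ}

namespace IsPermWord

variable {w : List ℕ}

theorem length_eq (hw : IsPermWord n w) : w.length = n := by
  simpa using List.Perm.length_eq hw

theorem mem_iff (hw : IsPermWord n w) {v : ℕ} : v ∈ w ↔ v < n := by
  rw [List.Perm.mem_iff hw, List.mem_range]

theorem getD_lt (hw : IsPermWord n w) {i : ℕ} (hi : i < n) : w.getD i 0 < n := by
  rw [← hw.length_eq] at hi
  rw [List.getD_eq_getElem _ _ hi, ← hw.mem_iff]
  exact List.getElem_mem hi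

theorem idxOf_lt (hw : IsPermWord n w) {v : ℕ} (hv : v < n) : w.idxOf v < n := by
  rw [← hw.length_eq, List.idxOf_lt_length_iff, hw.mem_iff]
  exact hv

theorem getD_idxOf (hw : IsPermWord n w) {v : ℕ} (hv : v < n) : w.getD (w.idxOf v) 0 = v := by
  rw [List.getD_eq_getElem _ _ (hw.length_eq ▸ hw.idxOf_lt hv), List.getElem_idxOf]

theorem idxOf_getD (hw : IsPermWord n w) {i : ℕ} (hi : i < n) : w.idxOf (w.getD i 0) = i := by
  rw [← hw.length_eq] at hi
  rw [List.getD_eq_getElem _ _ hi, (List.Perm.nodup_iff hw).2 List.nodup_range |>.idxOf_getElem]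

theorem getD_inj (hw : IsPermWord n w) {i j : ℕ} (hi : i < n) (hj : j < n) :
    w.getD i 0 = w.getD j 0 ↔ i = j :=
  ⟨fun h => by rw [← hw.idxOf_getD hi, h, hw.idxOf_getD hj], congrArg (w.getD · 0)⟩

end IsPermWord

theorem pv_coe (π : Equiv.Perm (Fin n)) (v : Fin n) : pv π v = π v := by
  simp [pv]

theorem pv_lt (π : Equiv.Perm (Fin n)) {v : ℕ} (hv : v < n) : pv π v < n := by
  simp [pv, hv]

theorem IsInvolution.pv_pv {π : Equiv.Perm (Fin n)} (hπ : IsInvolution π) {v : ℕ}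
    (hv : v < n) : pv π (pv π v) = v := by
  simp [pv, hv, hπ ⟨v, hv⟩]

/-- For an involution, the least element of the cycle of `v`. -/
def cycleMin (π : Equiv.Perm (Fin n)) (v : ℕ) : ℕ := min v (pv π v)

theorem cycleMin_le (π : Equiv.Perm (Fin n)) (v : ℕ) : cycleMin π v ≤ v := min_le_left _ _

theorem cycleMin_lt (π : Equiv.Perm (Fin n)) {v : ℕ} (hv : v < n) : cycleMin π v < n :=
  (cycleMin_le π v).trans_lt hv

namespace IsInvolution

variable {π : Equiv.Perm (Fin n)} {u v : ℕ}

theorem cycleMin_pv (hπ : IsInvolution π) (hv : v < n) :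
    cycleMin π (pv π v) = cycleMin π v := by
  simp only [cycleMin, hπ.pv_pv hv, min_comm]

theorem cycleMin_cycleMin (hπ : IsInvolution π) (hv : v < n) :
    cycleMin π (cycleMin π v) = cycleMin π v := by
  rcases min_choice v (pv π v) with h | h <;> change cycleMin π v = _ at h <;> rw [h]
  · exact h
  · rw [hπ.cycleMin_pv hv, h]

theorem eq_or_eq_pv_cycleMin (hπ : IsInvolution π) (hv : v < n) :
    v = cycleMin π v ∨ v = pv π (cycleMin π v) := by
  rcases min_choice v (pv π v) with h | h <;> change cycleMin π v = _ at h <;> rw [h]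
  · exact .inl rfl
  · exact .inr (hπ.pv_pv hv).symm

theorem cycleMin_lt_pv_cycleMin (hπ : IsInvolution π) (hv : v < n) (hne : pv π v ≠ v) :
    cycleMin π v < pv π (cycleMin π v) := by
  rcases le_total v (pv π v) with h | h
  · rw [cycleMin, min_eq_left h]; omega
  · rw [cycleMin, min_eq_right h, hπ.pv_pv hv]; omega

theorem pv_cycleMin_of_lt (hπ : IsInvolution π) (hv : v < n) (h : cycleMin π v < v) :
    pv π (cycleMin π v) = v :=
  ((hπ.eq_or_eq_pv_cycleMin hv).resolve_left h.ne').symm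

theorem pv_eq_of_cycleMin_eq (hπ : IsInvolution π) (hu : u < n) (hv : v < n)
    (h : cycleMin π u = cycleMin π v) (huv : u < v) : pv π u = v := by
  have := cycleMin_le π u
  rcases hπ.eq_or_eq_pv_cycleMin hu with hu' | hu' <;>
    rcases hπ.eq_or_eq_pv_cycleMin hv with hv' | hv' <;> rw [← h] at hv'
  · omega
  · rw [hu']; exact hv'.symm
  · omega
  · omega

end IsInvolution

/-- The order in which the values of `π` are listed in `foataWord π`: cycles by decreasing
least element, each cycle increasingly. -/
def FoataLT (π : Equiv.Perm (Fin n)) (u v : ℕ) : Prop :=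
  cycleMin π v < cycleMin π u ∨ (cycleMin π u = cycleMin π v ∧ u < v)

section FoataLT

variable {π : Equiv.Perm (Fin n)}

theorem foataLT_asymm {u v : ℕ} : FoataLT π u v → ¬ FoataLT π v u := by
  unfold FoataLT; omega

instance : Std.Irrefl (FoataLT π) := ⟨fun _ h => foataLT_asymm h h⟩

instance : IsTrans ℕ (FoataLT π) := ⟨fun _ _ _ => by unfold FoataLT; omega⟩

end FoataLT

def foataBlock (π : Equiv.Perm (Fin n)) (m : ℕ) : List ℕ :=
  if pv π m = m then [m] else if m < pv π m then [m, pv π m] else []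

theorem foataWord_eq_flatten (π : Equiv.Perm (Fin n)) :
    foataWord π = ((List.range n).reverse.map (foataBlock π)).flatten := rfl

namespace IsInvolution

variable {π : Equiv.Perm (Fin n)}

theorem mem_foataBlock_iff (hπ : IsInvolution π) {m x : ℕ} (hm : m < n) :
    x ∈ foataBlock π m ↔ x < n ∧ cycleMin π x = m := by
  have hmin : cycleMin π m = min m (pv π m) := rfl
  constructor
  · intro hx
    unfold foataBlock at hx
    split_ifs at hx with h₁ h₂
    · obtain rfl := List.mem_singleton.1 hx
      exact ⟨hm, by omega⟩
    · rcases List.mem_pair.1 hx with rfl | rfl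
      · exact ⟨hm, by omega⟩
      · exact ⟨pv_lt π hm, by rw [hπ.cycleMin_pv hm]; omega⟩
    · simp at hx
  · rintro ⟨hx, rfl⟩
    have hmm := hπ.cycleMin_cycleMin hx
    unfold foataBlock
    split_ifs with h₁ h₂
    · rcases hπ.eq_or_eq_pv_cycleMin hx with h | h
      exacts [List.mem_singleton.2 h, List.mem_singleton.2 (h.trans h₁)]
    · rcases hπ.eq_or_eq_pv_cycleMin hx with h | h <;> simp [← h]
    · omega

theorem mem_foataWord_iff (hπ : IsInvolution π) {x : ℕ} : x ∈ foataWord π ↔ x < n := by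
  simp only [foataWord_eq_flatten, List.mem_flatten, List.mem_map, List.mem_reverse,
    List.mem_range]
  constructor
  · rintro ⟨_, ⟨m, hm, rfl⟩, hx⟩
    exact ((hπ.mem_foataBlock_iff hm).1 hx).1
  · intro hx
    have hm := cycleMin_lt π hx
    exact ⟨_, ⟨_, hm, rfl⟩, (hπ.mem_foataBlock_iff hm).2 ⟨hx, rfl⟩⟩

theorem pairwise_foataLT_foataWord (hπ : IsInvolution π) :
    (foataWord π).Pairwise (FoataLT π) := by
  rw [foataWord_eq_flatten, List.pairwise_flatten, List.pairwise_map, List.pairwise_reverse]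
  constructor
  · simp only [List.mem_map, List.mem_reverse, List.mem_range]
    rintro _ ⟨m, hm, rfl⟩
    unfold foataBlock
    split_ifs with h₁ h₂
    · exact List.pairwise_singleton _ _
    · exact List.pairwise_pair.2 (.inr ⟨(hπ.cycleMin_pv hm).symm, h₂⟩)
    · exact List.Pairwise.nil
  · refine List.pairwise_lt_range.imp_of_mem fun ha hb hab x hx y hy => .inl ?_
    rw [((hπ.mem_foataBlock_iff (List.mem_range.1 hb)).1 hx).2,
      ((hπ.mem_foataBlock_iff (List.mem_range.1 ha)).1 hy).2]
    exact hab

theorem isPermWord_foataWord (hπ : IsInvolution π) : IsPermWord n (foataWord π) :=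
  (List.perm_ext_iff_of_nodup hπ.pairwise_foataLT_foataWord.nodup List.nodup_range).2
    fun x => by rw [hπ.mem_foataWord_iff, List.mem_range]

theorem foataWord_eq_of_pairwise (hπ : IsInvolution π) {w : List ℕ} (hw : IsPermWord n w)
    (hs : w.Pairwise (FoataLT π)) : foataWord π = w :=
  hπ.pairwise_foataLT_foataWord.eq_of_mem_iff hs fun x => by
    rw [hπ.mem_foataWord_iff, hw.mem_iff]

end IsInvolution

section SortedWord

variable {π : Equiv.Perm (Fin n)} {w : List ℕ}

theorem IsPermWord.idxOf_lt_idxOf_iff (hw : IsPermWord n w) (hs : w.Pairwise (FoataLT π))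
    {u v : ℕ} (hu : u < n) (hv : v < n) : w.idxOf u < w.idxOf v ↔ FoataLT π u v :=
  hs.idxOf_lt_idxOf_iff (fun _ _ => foataLT_asymm) (hw.mem_iff.2 hu) (hw.mem_iff.2 hv)

theorem IsPermWord.foataLT_getD (hw : IsPermWord n w) (hs : w.Pairwise (FoataLT π)) {i j : ℕ}
    (hij : i < j) (hj : j < n) : FoataLT π (w.getD i 0) (w.getD j 0) :=
  hs.rel_getD hij (hw.length_eq ▸ hj) 0

namespace IsInvolution

/-- An ascent of a sorted word is a 2-cycle: a smaller cycle minimum in between would have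
to be listed between the two letters. -/
theorem pv_getD_of_lt (hπ : IsInvolution π) (hw : IsPermWord n w)
    (hs : w.Pairwise (FoataLT π)) {p : ℕ} (hp : p + 1 < n)
    (hlt : w.getD p 0 < w.getD (p + 1) 0) : pv π (w.getD p 0) = w.getD (p + 1) 0 := by
  have hu := hw.getD_lt (p.lt_succ_self.trans hp)
  have hv := hw.getD_lt hp
  rcases hw.foataLT_getD hs p.lt_succ_self hp with hmin | ⟨heq, -⟩
  · set m := cycleMin π (w.getD (p + 1) 0)
    have hm : m < n := cycleMin_lt π hv
    have hmm : cycleMin π m = m := hπ.cycleMin_cycleMin hv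
    have hle := cycleMin_le π (w.getD p 0)
    have h₁ := (hw.idxOf_lt_idxOf_iff hs hu hm).2 (.inl (by omega))
    have h₂ := (hw.idxOf_lt_idxOf_iff hs hm hv).2 (.inr ⟨hmm, by omega⟩)
    rw [hw.idxOf_getD (by omega)] at h₁
    rw [hw.idxOf_getD hp] at h₂
    omega
  · exact hπ.pv_eq_of_cycleMin_eq hu hv heq hlt

theorem not_wContainsC123 (hπ : IsInvolution π) (hw : IsPermWord n w)
    (hs : w.Pairwise (FoataLT π)) : ¬ wContainsC123 w := by
  rintro ⟨i, hi, h₁, h₂⟩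
  rw [hw.length_eq] at hi
  have e₁ := hπ.pv_getD_of_lt hw hs (by omega) h₁
  have e₂ : pv π (w.getD (i + 1) 0) = w.getD (i + 2) 0 := hπ.pv_getD_of_lt hw hs hi h₂
  have e₃ := hπ.pv_pv (hw.getD_lt (show i < n by omega))
  rw [e₁, e₂] at e₃
  omega

/-- The two letters of a 2-cycle are adjacent in a sorted word: any letter listed between them
has the same cycle minimum. -/
theorem idxOf_pv_cycleMin (hπ : IsInvolution π) (hw : IsPermWord n w)
    (hs : w.Pairwise (FoataLT π)) {v : ℕ} (hv : v < n) (hne : pv π v ≠ v) :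
    w.idxOf (pv π (cycleMin π v)) = w.idxOf (cycleMin π v) + 1 := by
  set m := cycleMin π v
  have hm : m < n := cycleMin_lt π hv
  have hq : pv π m < n := pv_lt π hm
  have hmq := hπ.cycleMin_lt_pv_cycleMin hv hne
  have hmm : cycleMin π m = m := hπ.cycleMin_cycleMin hv
  have hqm : cycleMin π (pv π m) = m := by rw [hπ.cycleMin_pv hm, hmm]
  have hlt := (hw.idxOf_lt_idxOf_iff hs hm hq).2 (.inr ⟨hmm.trans hqm.symm, hmq⟩)
  by_contra hgap
  set x := w.getD (w.idxOf m + 1) 0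
  have hj : w.idxOf m + 1 < n := by have := hw.idxOf_lt hq; omega
  have hx : x < n := hw.getD_lt hj
  have hxpos : w.idxOf x = w.idxOf m + 1 := hw.idxOf_getD hj
  have h₁ := (hw.idxOf_lt_idxOf_iff hs hm hx).1 (by omega)
  have h₂ := (hw.idxOf_lt_idxOf_iff hs hx hq).1 (by omega)
  have hxm : cycleMin π x = m := by unfold FoataLT at h₁ h₂; omega
  rcases hπ.eq_or_eq_pv_cycleMin hx with h | h <;> rw [hxm] at h <;> rw [h] at hxpos <;> omega

end IsInvolution

end SortedWord

/-- The partner of `v` in the involution encoded by the word `w`: the letter with which `v`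
forms an ascent, or `v` itself. -/
def foataDecode (w : List ℕ) (v : ℕ) : ℕ :=
  if w.idxOf v + 1 < w.length ∧ v < w.getD (w.idxOf v + 1) 0 then w.getD (w.idxOf v + 1) 0
  else if 0 < w.idxOf v ∧ w.getD (w.idxOf v - 1) 0 < v then w.getD (w.idxOf v - 1) 0
  else v

theorem IsPermWord.foataDecode_getD {w : List ℕ} (hw : IsPermWord n w) {p : ℕ} (hp : p < n) :
    foataDecode w (w.getD p 0) =
      if p + 1 < n ∧ w.getD p 0 < w.getD (p + 1) 0 then w.getD (p + 1) 0
      else if 0 < p ∧ w.getD (p - 1) 0 < w.getD p 0 then w.getD (p - 1) 0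
      else w.getD p 0 := by
  rw [foataDecode, hw.idxOf_getD hp, hw.length_eq]

theorem IsInvolution.pv_eq_foataDecode {π : Equiv.Perm (Fin n)} {w : List ℕ}
    (hπ : IsInvolution π) (hw : IsPermWord n w) (hs : w.Pairwise (FoataLT π)) {v : ℕ}
    (hv : v < n) : pv π v = foataDecode w v := by
  obtain ⟨p, hp, rfl⟩ : ∃ p < n, w.getD p 0 = v := ⟨_, hw.idxOf_lt hv, hw.getD_idxOf hv⟩
  rw [hw.foataDecode_getD hp]
  split_ifs with hasc hdesc
  · exact hπ.pv_getD_of_lt hw hs hasc.1 hasc.2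
  · have hp' : p - 1 + 1 = p := by omega
    have h := hπ.pv_getD_of_lt hw hs (p := p - 1) (by omega) (by rw [hp']; exact hdesc.2)
    rw [hp'] at h
    rw [← h, hπ.pv_pv (hw.getD_lt (by omega))]
  · by_contra hne
    have hadj := hπ.idxOf_pv_cycleMin hw hs hv hne
    have hlt := hπ.cycleMin_lt_pv_cycleMin hv hne
    have hm := cycleMin_lt π hv
    rcases hπ.eq_or_eq_pv_cycleMin hv with h | h <;> rw [← h] at hadj hlt
    · rw [hw.idxOf_getD hp] at hadj
      have hq := hw.getD_idxOf (pv_lt π hv)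
      rw [hadj] at hq
      have := hw.idxOf_lt (pv_lt π hv)
      exact hasc ⟨by omega, by rw [hq]; exact hlt⟩
    · rw [hw.idxOf_getD hp] at hadj
      have hm' := hw.getD_idxOf hm
      rw [show w.idxOf (cycleMin π (w.getD p 0)) = p - 1 by omega] at hm'
      exact hdesc ⟨by omega, by rw [hm']; exact hlt⟩

def HasCrossing (π : Equiv.Perm (Fin n)) : Prop :=
  ∃ a b : Fin n, a < b ∧ b < π a ∧ π a < π b

theorem IsInvolution.contains3412_iff_hasCrossing {π : Equiv.Perm (Fin n)}
    (hπ : IsInvolution π) : Contains3412 π ↔ HasCrossing π := by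
  constructor
  · rintro ⟨i₁, i₂, i₃, i₄, h₁₂, h₂₃, h₃₄, k₃₄, k₄₁, k₁₂⟩
    by_cases hc₁ : i₂ < π i₁
    · exact ⟨i₁, i₂, h₁₂, hc₁, k₁₂⟩
    have hc₁' : π i₁ < i₂ := by
      refine lt_of_le_of_ne (not_lt.1 hc₁) fun h => ?_
      rw [← h, hπ] at k₁₂
      exact lt_asymm k₁₂ (by rw [h]; exact h₁₂)
    by_cases hc₂ : π i₄ < i₃
    · exact ⟨π i₃, π i₄, k₃₄, by rwa [hπ], by rwa [hπ, hπ]⟩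
    have hc₂' : i₃ < π i₄ := by
      refine lt_of_le_of_ne (not_lt.1 hc₂) fun h => ?_
      rw [h, hπ] at k₃₄
      exact lt_asymm k₃₄ (by rw [← h]; exact h₃₄)
    exact ⟨π i₃, i₂, (k₃₄.trans k₄₁).trans hc₁', by rwa [hπ],
      by rw [hπ]; exact hc₂'.trans (k₄₁.trans k₁₂)⟩
  · rintro ⟨a, b, h₁, h₂, h₃⟩
    exact ⟨a, b, π a, π b, h₁, h₂, h₃, by rwa [hπ, hπ], by rwa [hπ], h₃⟩

theorem IsInvolution.wContains132_iff_hasCrossing {π : Equiv.Perm (Fin n)} {w : List ℕ}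
    (hπ : IsInvolution π) (hw : IsPermWord n w) (hs : w.Pairwise (FoataLT π)) :
    wContains132 w ↔ HasCrossing π := by
  constructor
  · rintro ⟨i, j, k, hij, hjk, hk, h₁, h₂⟩
    rw [hw.length_eq] at hk
    have hxy := hw.foataLT_getD hs hij (hjk.trans hk)
    have hyz := hw.foataLT_getD hs hjk hk
    have hxz := hw.foataLT_getD hs (hij.trans hjk) hk
    have hy := hw.getD_lt (hjk.trans hk)
    have hz := hw.getD_lt hk
    have := cycleMin_le π (w.getD i 0)
    unfold FoataLT at hxy hyz hxz
    refine ⟨⟨_, cycleMin_lt π hz⟩, ⟨_, cycleMin_lt π hy⟩, ?_, ?_, ?_⟩ <;>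
      simp only [Fin.lt_def, ← pv_coe, hπ.pv_cycleMin_of_lt hz (by omega),
        hπ.pv_cycleMin_of_lt hy (by omega)] <;>
      omega
  · rintro ⟨a, b, hab, hba, hpab⟩
    rw [Fin.lt_def] at hab hba hpab
    have hmin : ∀ c : Fin n, c < π c → cycleMin π c = c ∧ cycleMin π (π c) = c := by
      intro c hc
      rw [← pv_coe, hπ.cycleMin_pv c.isLt, cycleMin, pv_coe]
      exact ⟨min_eq_left (Fin.le_of_lt hc), min_eq_left (Fin.le_of_lt hc)⟩
    obtain ⟨ha, hpa⟩ := hmin a (by rw [Fin.lt_def]; omega)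
    obtain ⟨hb, hpb⟩ := hmin b (by rw [Fin.lt_def]; omega)
    have h₁ := (hw.idxOf_lt_idxOf_iff hs b.isLt (π b).isLt).2
      (.inr ⟨hb.trans hpb.symm, hpab.trans' hba⟩)
    have h₂ := (hw.idxOf_lt_idxOf_iff hs (π b).isLt (π a).isLt).2
      (.inl (by rw [hpa, hpb]; exact hab))
    refine ⟨_, _, _, h₁, h₂, hw.length_eq ▸ hw.idxOf_lt (π a).isLt, ?_, ?_⟩ <;>
      rwa [hw.getD_idxOf (Fin.isLt _), hw.getD_idxOf (Fin.isLt _)]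

namespace IsPermWord

variable {w : List ℕ}

theorem foataDecode_lt (hw : IsPermWord n w) {v : ℕ} (hv : v < n) : foataDecode w v < n := by
  obtain ⟨p, hp, rfl⟩ : ∃ p < n, w.getD p 0 = v := ⟨_, hw.idxOf_lt hv, hw.getD_idxOf hv⟩
  rw [hw.foataDecode_getD hp]
  split_ifs with hasc hdesc
  exacts [hw.getD_lt hasc.1, hw.getD_lt (by omega), hw.getD_lt hp]

/-- Without consecutive `123`, a letter cannot be in two ascents, so decoding is involutive. -/
theorem foataDecode_foataDecode (hw : IsPermWord n w) (h123 : ¬ wContainsC123 w) {v : ℕ}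
    (hv : v < n) : foataDecode w (foataDecode w v) = v := by
  obtain ⟨p, hp, rfl⟩ : ∃ p < n, w.getD p 0 = v := ⟨_, hw.idxOf_lt hv, hw.getD_idxOf hv⟩
  rw [hw.foataDecode_getD hp]
  split_ifs with hasc hdesc
  · have hnasc : ¬ (p + 1 + 1 < n ∧ w.getD (p + 1) 0 < w.getD (p + 1 + 1) 0) :=
      fun h => h123 ⟨p, by rw [hw.length_eq]; omega, hasc.2, h.2⟩
    rw [hw.foataDecode_getD hasc.1, if_neg hnasc, if_pos ⟨p.succ_pos, hasc.2⟩, p.add_sub_cancel]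
  · have hp' : p - 1 + 1 = p := by omega
    rw [hw.foataDecode_getD (by omega), if_pos ⟨by omega, by rw [hp']; exact hdesc.2⟩, hp']
  · rw [hw.foataDecode_getD hp, if_neg hasc, if_neg hdesc]

theorem foataLT_getD_succ (hw : IsPermWord n w) (h132 : ¬ wContains132 w)
    (h123 : ¬ wContainsC123 w) {π : Equiv.Perm (Fin n)}
    (hπ : ∀ v < n, pv π v = foataDecode w v) {p : ℕ} (hp : p + 1 < n) :
    FoataLT π (w.getD p 0) (w.getD (p + 1) 0) := by
  have hc : ∀ q < n, cycleMin π (w.getD q 0) = min (w.getD q 0) (foataDecode w (w.getD q 0)) :=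
    fun q hq => by rw [cycleMin, hπ _ (hw.getD_lt hq)]
  have hne : w.getD p 0 ≠ w.getD (p + 1) 0 := by rw [Ne, hw.getD_inj (by omega) hp]; omega
  rcases hne.lt_or_gt with hlt | hgt
  · have hnasc : ¬ (p + 1 + 1 < n ∧ w.getD (p + 1) 0 < w.getD (p + 1 + 1) 0) :=
      fun h => h123 ⟨p, by rw [hw.length_eq]; omega, hlt, h.2⟩
    refine .inr ⟨?_, hlt⟩
    rw [hc p (by omega), hc (p + 1) hp, hw.foataDecode_getD (by omega), if_pos ⟨hp, hlt⟩,
      hw.foataDecode_getD hp, if_neg hnasc, if_pos ⟨p.succ_pos, hlt⟩, p.add_sub_cancel]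
    omega
  · refine .inl ?_
    have hle := cycleMin_le π (w.getD (p + 1) 0)
    rw [hc p (by omega), hw.foataDecode_getD (by omega), if_neg (by omega)]
    split_ifs with hdesc
    · have hne' : w.getD (p + 1) 0 ≠ w.getD (p - 1) 0 := by
        rw [Ne, hw.getD_inj hp (by omega)]; omega
      have : ¬ w.getD (p - 1) 0 < w.getD (p + 1) 0 := fun h =>
        h132 ⟨p - 1, p, p + 1, by omega, by omega, by rw [hw.length_eq]; exact hp, h, hgt⟩
      omega
    · omega

theorem exists_isInvolution_foataWord_eq (hw : IsPermWord n w) (h132 : ¬ wContains132 w)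
    (h123 : ¬ wContainsC123 w) :
    ∃ π : Equiv.Perm (Fin n), IsInvolution π ∧ foataWord π = w := by
  let f : Fin n → Fin n := fun v => ⟨foataDecode w v, hw.foataDecode_lt v.isLt⟩
  have hf : Function.Involutive f := fun v => Fin.ext (hw.foataDecode_foataDecode h123 v.isLt)
  have hπ : IsInvolution (hf.toPerm f) := hf
  refine ⟨hf.toPerm f, hπ, hπ.foataWord_eq_of_pairwise hw ?_⟩
  have hpv : ∀ v < n, pv (hf.toPerm f) v = foataDecode w v := fun v hv => by simp [pv, hv, f]
  refine List.isChain_iff_pairwise.1 (List.isChain_iff_getElem.2 fun i hi => ?_)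
  have h := hw.foataLT_getD_succ h132 h123 hpv (hw.length_eq ▸ hi)
  rwa [List.getD_eq_getElem _ _ (by omega), List.getD_eq_getElem _ _ hi] at h

end IsPermWord

namespace IsInvolution

variable {π σ : Equiv.Perm (Fin n)}

theorem wContains132_foataWord_iff (hπ : IsInvolution π) :
    wContains132 (foataWord π) ↔ Contains3412 π :=
  (hπ.wContains132_iff_hasCrossing hπ.isPermWord_foataWord hπ.pairwise_foataLT_foataWord).trans
    hπ.contains3412_iff_hasCrossing.symm

theorem eq_of_foataWord_eq (hπ : IsInvolution π) (hσ : IsInvolution σ)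
    (h : foataWord π = foataWord σ) : π = σ := by
  refine Equiv.ext fun x => Fin.ext ?_
  rw [← pv_coe, ← pv_coe,
    hπ.pv_eq_foataDecode hπ.isPermWord_foataWord hπ.pairwise_foataLT_foataWord x.isLt,
    hσ.pv_eq_foataDecode hσ.isPermWord_foataWord hσ.pairwise_foataLT_foataWord x.isLt, h]

end IsInvolution

/-- The Foata map `F` restricts to a bijection from the set
`I_n(3412)` of involutions of length `n` avoiding 3412 onto the set
`S_n(132, 1̲2̲3̲)` of permutations (one-line words) avoiding the classical pattern
132 and the consecutive pattern 123. -/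
theorem foata_bijOn (n : ℕ) :
    Set.BijOn (fun π : Equiv.Perm (Fin n) => foataWord π)
      {π : Equiv.Perm (Fin n) | IsInvolution π ∧ ¬ Contains3412 π}
      {w : List ℕ | IsPermWord n w ∧ ¬ wContains132 w ∧ ¬ wContainsC123 w} := by
  refine ⟨?_, ?_, ?_⟩
  · rintro π ⟨hπ, h3412⟩
    exact ⟨hπ.isPermWord_foataWord, hπ.wContains132_foataWord_iff.not.2 h3412,
      hπ.not_wContainsC123 hπ.isPermWord_foataWord hπ.pairwise_foataLT_foataWord⟩
  · rintro π ⟨hπ, -⟩ σ ⟨hσ, -⟩ h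
    exact hπ.eq_of_foataWord_eq hσ h
  · rintro w ⟨hw, h132, h123⟩
    obtain ⟨π, hπ, rfl⟩ := hw.exists_isInvolution_foataWord_eq h132 h123
    exact ⟨π, ⟨hπ, hπ.wContains132_foataWord_iff.not.1 h132⟩, rfl⟩
end

section
/- Let π ∈ I_n(3412). Then inv(π) = 2A − t, where A is the area between the Motzkin path Ψ(π) and the x-axis and t is the number of non-trivial tunnels of Ψ(π) (equivalently, t is the number of 2-cycles of π). -/
open scoped Classical

/-!
Call the 2-cycles `v < π v` of `π` arcs. The step of `Ψ(π)` at `v` is `U` and the one at `π v`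
is `D`, so the level after `i` steps is the number of arcs with `v < i ≤ π v`, and twice the
area is `2 ∑ (π v - v)` over the arcs. Avoiding `3412` means that arcs do not cross; hence a
pair `i < j` is an inversion exactly when `j ≤ π i` or `π j < i`, two disjoint cases
contributing `∑ (π v - v)` and `∑ (π v - v - 1)` inversions. Adding the number of arcs gives
`2 ∑ (π v - v)`.
-/

open Finset

theorem List.count_take_ofFn {α : Type*} [DecidableEq α] {n : ℕ} (f : Fin n → α) (a : α)
    (i : ℕ) : ((List.ofFn f).take i).count a = #{v : Fin n | (v : ℕ) < i ∧ f v = a} := by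
  have hcount : ∀ l : List α, l.count a = (l.map fun x => if x = a then 1 else 0).sum := by
    intro l
    induction l <;> simp [List.count_cons, *]
    omega
  rw [hcount, List.map_take, List.map_ofFn, List.sum_take_ofFn, card_filter, sum_filter]
  simp [ite_and]

theorem twoArea_eq_two_mul_sum_levelAt {w : List Step} (h : levelAt w w.length = 0) :
    twoArea w = 2 * ∑ i ∈ range w.length, levelAt w i := by
  have hshift : ∑ i ∈ range w.length, levelAt w (i + 1) = ∑ i ∈ range w.length, levelAt w i := by
    have h0 : levelAt w 0 = 0 := by simp [levelAt]
    linarith [sum_range_succ (levelAt w) w.length, sum_range_succ' (levelAt w) w.length]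
  rw [twoArea, sum_add_distrib, hshift, two_mul]

section psiWord

variable {n : ℕ} {π : Equiv.Perm (Fin n)}

theorem length_psiWord : (psiWord π).length = n := by
  simp [psiWord]

theorem count_take_psiWord_U (i : ℕ) :
    ((psiWord π).take i).count Step.U = #{v : Fin n | (v : ℕ) < i ∧ v < π v} := by
  rw [psiWord, List.count_take_ofFn]
  congr 1
  ext v
  by_cases hv : π v = v <;> by_cases hlt : v < π v <;> simp_all

theorem count_take_psiWord_D (i : ℕ) :
    ((psiWord π).take i).count Step.D = #{v : Fin n | (v : ℕ) < i ∧ π v < v} := by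
  rw [psiWord, List.count_take_ofFn]
  congr 1
  ext v
  by_cases hv : π v = v <;> by_cases hlt : v < π v <;> simp_all <;> omega

theorem count_psiWord_U : (psiWord π).count Step.U = #{v : Fin n | v < π v} := by
  rw [← List.take_length (l := psiWord π), count_take_psiWord_U, length_psiWord]
  simp

end psiWord

namespace IsInvolution

variable {n : ℕ} {π : Equiv.Perm (Fin n)}

theorem levelAt_psiWord (hπ : IsInvolution π) (i : ℕ) :
    levelAt (psiWord π) i = #{v : Fin n | (v : ℕ) < i ∧ i ≤ π v} := by
  have hD : #{v : Fin n | (v : ℕ) < i ∧ π v < v} = #{v : Fin n | (π v : ℕ) < i ∧ v < π v} :=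
    card_equiv π fun v => by simp [hπ v]
  have hsplit : #{v : Fin n | (v : ℕ) < i ∧ v < π v}
      = #{v : Fin n | (π v : ℕ) < i ∧ v < π v} + #{v : Fin n | (v : ℕ) < i ∧ i ≤ π v} := by
    simp only [card_filter, ← sum_add_distrib]
    refine sum_congr rfl fun v _ => ?_
    split_ifs <;> omega
  rw [levelAt, count_take_psiWord_U, count_take_psiWord_D, hD, hsplit, Nat.add_sub_cancel_left]

/-- Truncated subtraction makes `π v - v` the length of the arc `(v, π v)` when `v < π v`
and `0` otherwise. -/
theorem twoArea_psiWord (hπ : IsInvolution π) :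
    twoArea (psiWord π) = 2 * ∑ v : Fin n, ((π v : ℕ) - v) := by
  have hend : levelAt (psiWord π) (psiWord π).length = 0 := by
    rw [hπ.levelAt_psiWord, length_psiWord, card_eq_zero, filter_eq_empty_iff]
    exact fun v _ ⟨_, hv⟩ => (π v).is_lt.not_ge hv
  rw [twoArea_eq_two_mul_sum_levelAt hend, length_psiWord]
  congr 1
  simp only [hπ.levelAt_psiWord, card_filter]
  rw [sum_comm]
  refine sum_congr rfl fun v _ => ?_
  rw [← card_filter, ← Nat.card_Ioc]
  congr 1
  ext i
  simp only [mem_filter, mem_range, mem_Ioc]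
  omega

/-- Avoiding `3412` means that two arcs of `π` never cross. -/
theorem apply_lt_apply_of_lt_of_lt (hπ : IsInvolution π) (h3412 : ¬ Contains3412 π)
    {a c : Fin n} (hac : a < c) (hca : c < π a) : π c < π a := by
  refine lt_of_le_of_ne (not_lt.1 fun hlt => h3412 ⟨a, c, π a, π c, hac, hca, hlt, ?_⟩)
    (π.injective.ne hac.ne')
  rw [hπ a, hπ c]
  exact ⟨hac, hca, hlt⟩

theorem apply_lt_apply_iff (hπ : IsInvolution π) (h3412 : ¬ Contains3412 π) {i j : Fin n}
    (hij : i < j) : π j < π i ↔ j ≤ π i ∨ π j < i := by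
  constructor
  · intro hji
    by_contra! h
    have hi : i < π j := lt_of_le_of_ne h.2 fun e => by rw [e, hπ] at h; exact lt_irrefl _ h.1
    have := hπ.apply_lt_apply_of_lt_of_lt h3412 hi hji
    rw [hπ] at this
    exact lt_asymm this h.1
  · rintro (hj | hj)
    · rcases hj.lt_or_eq with hj | rfl
      · exact hπ.apply_lt_apply_of_lt_of_lt h3412 hij hj
      · rwa [hπ]
    · by_contra! h
      have := hπ.apply_lt_apply_of_lt_of_lt h3412 (h.lt_of_ne (π.injective.ne hij.ne))
        (by rwa [hπ])
      rw [hπ, hπ] at this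
      exact lt_asymm this hij

theorem le_apply_of_le_apply (hπ : IsInvolution π) (h3412 : ¬ Contains3412 π) {i j : Fin n}
    (hij : i < j) (hj : j ≤ π i) : i ≤ π j := by
  by_contra! h
  rcases hj.lt_or_eq with hj | rfl
  · have := hπ.apply_lt_apply_of_lt_of_lt h3412 h (by rwa [hπ])
    rw [hπ] at this
    exact lt_asymm this hj
  · rw [hπ] at h
    exact lt_irrefl _ h

theorem invCount_eq (hπ : IsInvolution π) (h3412 : ¬ Contains3412 π) :
    invCount π = ∑ v : Fin n, ((π v : ℕ) - v) + ∑ v : Fin n, ((π v : ℕ) - v - 1) := by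
  have hsplit : invCount π = #{p : Fin n × Fin n | p.1 < p.2 ∧ p.2 ≤ π p.1}
      + #{p : Fin n × Fin n | π p.2 < p.1 ∧ p.1 < p.2} := by
    rw [invCount, ← card_union_of_disjoint, ← filter_or]
    · congr 1
      ext ⟨i, j⟩
      by_cases hij : i < j
      · simp [hij, hπ.apply_lt_apply_iff h3412 hij]
      · simp [hij]
    · refine disjoint_filter.2 fun ⟨i, j⟩ _ h h' => ?_
      exact (hπ.le_apply_of_le_apply h3412 h.1 h.2).not_gt h'.1
  have hforward : #{p : Fin n × Fin n | p.1 < p.2 ∧ p.2 ≤ π p.1}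
      = ∑ v : Fin n, ((π v : ℕ) - v) := by
    rw [card_filter, Fintype.sum_prod_type]
    refine sum_congr rfl fun v _ => ?_
    rw [← card_filter, ← Fin.card_Ioc]
    congr 1
    ext; simp
  have hbackward : #{p : Fin n × Fin n | π p.2 < p.1 ∧ p.1 < p.2}
      = ∑ v : Fin n, ((π v : ℕ) - v - 1) := by
    rw [card_filter, Fintype.sum_prod_type_right, ← Equiv.sum_comp π]
    refine sum_congr rfl fun v _ => ?_
    rw [← card_filter, ← Fin.card_Ioo]
    congr 1
    ext; simp [hπ v]
  rw [hsplit, hforward, hbackward]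

end IsInvolution

/-- For `π ∈ I_n(3412)`: `inv(π) = 2A − t`, where `A` is the area
between the Motzkin path `Ψ(π)` and the x-axis (so `twoArea (psiWord π) = 2A`) and
`t` is the number of non-trivial tunnels of `Ψ(π)`, i.e. its number of up steps. -/
theorem inv_eq_twoArea_sub_tunnels (n : ℕ) (π : Equiv.Perm (Fin n))
    (h₁ : IsInvolution π) (h₂ : ¬ Contains3412 π) :
    invCount π + (psiWord π).count Step.U = twoArea (psiWord π) := by
  rw [h₁.invCount_eq h₂, count_psiWord_U, h₁.twoArea_psiWord, card_filter, two_mul,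
    add_assoc, ← sum_add_distrib]
  congr 1
  refine sum_congr rfl fun v _ => ?_
  split_ifs <;> omega
end

section
/- Let π ∈ I_n(3412). Then for every index 1 ≤ i ≤ n−1, π has a descent at i (i.e. π_i > π_{i+1}) if and only if the two-letter factor of Ψ(π) at positions i, i+1 is one of UU, DD, UH, HD, UD. Consequently des(π) equals the total number of occurrences of the factors UU, DD, UH, HD, UD in Ψ(π). -/
open scoped Classical

open Finset

/-! The five factors are exactly those in which position `i` opens a 2-cycle (letter `U`)
or position `i+1` closes one (letter `D`). If neither happens, `π i ≤ i < i+1 ≤ π (i+1)` is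
an ascent. Otherwise `π (i+1) ≤ i+1 ≤ π i` or `π (i+1) ≤ i ≤ π i`, and injectivity gives a
descent, except in the cases `UU` and `DD`, where an ascent would make the 2-cycles through
`i` and `i+1` cross, i.e. form an occurrence of `3412`. Counting positions gives the formula
for `des(π)`. -/

def psiStep {n : ℕ} (π : Equiv.Perm (Fin n)) (v : Fin n) : Step :=
  if π v = v then Step.H else if v < π v then Step.U else Step.D

lemma psiWord_eq_ofFn {n : ℕ} (π : Equiv.Perm (Fin n)) :
    psiWord π = List.ofFn (psiStep π) := rfl

lemma psiStep_eq_U_iff {n : ℕ} (π : Equiv.Perm (Fin n)) (v : Fin n) :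
    psiStep π v = Step.U ↔ v < π v := by
  unfold psiStep
  split_ifs <;> simp_all

lemma psiStep_eq_D_iff {n : ℕ} (π : Equiv.Perm (Fin n)) (v : Fin n) :
    psiStep π v = Step.D ↔ π v < v := by
  unfold psiStep
  split_ifs with h₁ h₂
  · simp [h₁]
  · simp [h₂.not_gt]
  · simpa using lt_of_le_of_ne (not_lt.mp h₂) h₁

lemma psiWord_drop_take_two {n : ℕ} (π : Equiv.Perm (Fin n)) (i : ℕ) (hi : i + 1 < n) :
    ((psiWord π).drop i).take 2 = [psiStep π ⟨i, by omega⟩, psiStep π ⟨i + 1, hi⟩] := by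
  have hlen : (psiWord π).length = n := List.length_ofFn
  rw [List.drop_eq_getElem_cons (by omega), List.drop_eq_getElem_cons (by omega)]
  simp [psiWord_eq_ofFn]

def descentFactors : List (List Step) :=
  [[Step.U, Step.U], [Step.D, Step.D], [Step.U, Step.H], [Step.H, Step.D], [Step.U, Step.D]]

lemma Step.pair_mem_descentFactors_iff (x y : Step) :
    [x, y] ∈ descentFactors ↔ x = Step.U ∨ y = Step.D := by
  cases x <;> cases y <;> decide

lemma pv_succ_lt_pv_iff_apply_lt {n : ℕ} (π : Equiv.Perm (Fin n)) (i : ℕ) (hi : i + 1 < n) :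
    pv π (i + 1) < pv π i ↔ π ⟨i + 1, hi⟩ < π ⟨i, by omega⟩ := by
  simp only [pv, hi, show i < n by omega, dif_pos, Fin.lt_def]

lemma IsInvolution.contains3412_of_crossing {n : ℕ} {π : Equiv.Perm (Fin n)}
    (hπ : IsInvolution π) {x y : Fin n} (hxy : x < y) (hyx : y < π x) (hπxy : π x < π y) :
    Contains3412 π :=
  ⟨x, y, π x, π y, hxy, hyx, hπxy, by rw [hπ x, hπ y]; exact ⟨hxy, hyx, hπxy⟩⟩

theorem IsInvolution.apply_succ_lt_apply_iff {n : ℕ} {π : Equiv.Perm (Fin n)}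
    (hπ : IsInvolution π) (h3412 : ¬ Contains3412 π) {a b : Fin n} (hab : (a : ℕ) + 1 = b) :
    π b < π a ↔ a < π a ∨ π b < b := by
  have hπa : π a = b → π b = a := fun h => h ▸ hπ a
  have hπb : π b = a → π a = b := fun h => h ▸ hπ b
  have hne : π a ≠ π b := π.injective.ne (by rintro rfl; omega)
  simp only [Fin.ext_iff] at hπa hπb hne
  simp only [Fin.lt_def]
  refine ⟨fun h => by omega, fun h => by_contra fun hasc => ?_⟩
  rcases h with ha | hb
  · refine h3412 (hπ.contains3412_of_crossing (x := a) (y := b) ?_ ?_ ?_) <;>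
      simp only [Fin.lt_def] <;> omega
  · refine h3412 (hπ.contains3412_of_crossing (x := π a) (y := π b) ?_ ?_ ?_) <;>
      simp only [hπ a, hπ b, Fin.lt_def] <;> omega

lemma occFactor_eq_card_filter_take {p : List Step} (w : List Step) (hp : p ≠ []) :
    occFactor p w =
      #{i ∈ range (w.length + 1 - p.length) | (w.drop i).take p.length = p} := by
  unfold occFactor
  congr 1
  ext i
  simp only [mem_filter, mem_range, List.prefix_iff_eq_take]
  have hlen : 0 < p.length := List.length_pos_iff.mpr hp
  constructor
  · rintro ⟨hi, htake⟩
    have := congrArg List.length htake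
    simp only [List.length_take, List.length_drop] at this
    exact ⟨by omega, htake.symm⟩
  · rintro ⟨hi, htake⟩
    exact ⟨by omega, htake.symm⟩

lemma Finset.card_filter_mem_eq_sum {ι α : Type*} [DecidableEq α] (s : Finset ι) (f : ι → α)
    {L : List α} [DecidablePred fun i => f i ∈ L] (hL : L.Nodup) :
    #{i ∈ s | f i ∈ L} = (L.map fun p => #{i ∈ s | f i = p}).sum := by
  rw [← List.sum_toFinset _ hL, sum_card_fiberwise_eq_card_filter]
  simp only [List.mem_toFinset]

theorem IsInvolution.pv_succ_lt_pv_iff_mem_descentFactors {n : ℕ} {π : Equiv.Perm (Fin n)}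
    (hπ : IsInvolution π) (h3412 : ¬ Contains3412 π) (i : ℕ) (hi : i + 1 < n) :
    pv π (i + 1) < pv π i ↔ ((psiWord π).drop i).take 2 ∈ descentFactors := by
  rw [pv_succ_lt_pv_iff_apply_lt π i hi, psiWord_drop_take_two π i hi,
    Step.pair_mem_descentFactors_iff, psiStep_eq_U_iff, psiStep_eq_D_iff]
  exact hπ.apply_succ_lt_apply_iff h3412 rfl

theorem IsInvolution.desCount_eq_sum_occFactor {n : ℕ} {π : Equiv.Perm (Fin n)}
    (hπ : IsInvolution π) (h3412 : ¬ Contains3412 π) :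
    desCount π = (descentFactors.map fun p => occFactor p (psiWord π)).sum := by
  have hlen : (psiWord π).length = n := List.length_ofFn
  calc desCount π = #{i ∈ range (n - 1) | ((psiWord π).drop i).take 2 ∈ descentFactors} := by
        unfold desCount
        congr 1
        exact filter_congr fun i hi =>
          hπ.pv_succ_lt_pv_iff_mem_descentFactors h3412 i (by simp at hi; omega)
    _ = _ := by
        rw [card_filter_mem_eq_sum _ (fun i => ((psiWord π).drop i).take 2) (by decide)]
        simp [descentFactors, occFactor_eq_card_filter_take, hlen]

/-- For `π ∈ I_n(3412)`: `π` has a descent at `i` if and only if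
the two-letter factor of `Ψ(π)` at positions `i, i+1` is one of `UU, DD, UH, HD, UD`;
consequently `des(π)` is the total number of occurrences of these five factors. -/
theorem descent_iff_factor (n : ℕ) (π : Equiv.Perm (Fin n))
    (h₁ : IsInvolution π) (h₂ : ¬ Contains3412 π) :
    (∀ i : ℕ, i + 1 < n →
      (pv π (i + 1) < pv π i ↔
        ((psiWord π).drop i).take 2 ∈
          [[Step.U, Step.U], [Step.D, Step.D], [Step.U, Step.H],
            [Step.H, Step.D], [Step.U, Step.D]])) ∧
    desCount π =
      occFactor [Step.U, Step.U] (psiWord π) + occFactor [Step.D, Step.D] (psiWord π) +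
      occFactor [Step.U, Step.H] (psiWord π) + occFactor [Step.H, Step.D] (psiWord π) +
      occFactor [Step.U, Step.D] (psiWord π) := by
  refine ⟨h₁.pv_succ_lt_pv_iff_mem_descentFactors h₂, ?_⟩
  rw [h₁.desCount_eq_sum_occFactor h₂]
  simp [descentFactors, add_assoc]
end

section
/- Let F = F(x,y,z,w) ∈ ℚ[[x,y,z,w]] be the formal power series F = Σ_{n≥0} Σ_{π ∈ I_n(3412)} x^n y^{inv(π)} z^{des(π)} w^{fix(π)}. Then F satisfies the functional equation F(x,y,z,w) = 1 + xw·F(x,y,z,w) + x²yz·F(x,y,z,w) + x²yz²·(F(xy²,y,z,w) − 1)·F(x,y,z,w), where F(xy²,y,z,w) denotes the series obtained from F by substituting xy² for x. -/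
open scoped Classical

/-- The generating function `F(x,y,z,w) = Σ_{n≥0} Σ_{π ∈ I_n(3412)}
x^n y^{inv π} z^{des π} w^{fix π}`, with `x = X 0`, `y = X 1`, `z = X 2`, `w = X 3`. -/
noncomputable def Finv : MvPowerSeries (Fin 4) ℚ := fun m =>
  ({π : Equiv.Perm (Fin (m 0)) | IsInvolution π ∧ ¬ Contains3412 π ∧
    invCount π = m 1 ∧ desCount π = m 2 ∧ fixCount π = m 3}.ncard : ℚ)

/-- The series `F(xy², y, z, w)` obtained from `Finv` by substituting `xy²` for `x`:
its coefficient on `x^n y^b z^c w^d` counts `π ∈ I_n(3412)` with `inv π + 2n = b`,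
`des π = c`, `fix π = d`. -/
noncomputable def FinvSub : MvPowerSeries (Fin 4) ℚ := fun m =>
  ({π : Equiv.Perm (Fin (m 0)) | IsInvolution π ∧ ¬ Contains3412 π ∧
    invCount π + 2 * (m 0) = m 1 ∧ desCount π = m 2 ∧ fixCount π = m 3}.ncard : ℚ)

/-!
Let `π ∈ I_n(3412)` with `n ≥ 1` and `k = π 0`. For `0 < i < k` we must have `π i < k`, since
otherwise the positions `0 < i < k < π i` carry the values `k, π i, 0, i`, a 3412 pattern. So `π`
maps `[0, k]` onto itself and splits as a direct sum `β ⊕ τ` of a block `β` (with `β 0` the last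
position) and an arbitrary `τ ∈ I(3412)`; the statistics `n, inv, des, fix` are additive. A block
of size one is a fixed point, of weight `xw`. A larger block is the 2-cycle `(0 k)` wrapped around
some `σ ∈ I_{k-1}(3412)`: wrapping adds `2|σ| + 1` inversions, a descent at the start and, when
`σ` is nonempty, one at the end, giving the weights `x²yz` (for `σ = ∅`) and
`x²yz² · x^{|σ|} y^{inv σ + 2|σ|} z^{des σ} w^{fix σ}`. These bijections, read as identities
between generating functions of weighted types, give `F = 1 + (xw + x²yz + x²yz²(F(xy²) − 1)) F`.
-/

open Equiv Finset MvPowerSeries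

noncomputable section

universe u

section GenFun

open Finset.HasAntidiagonal

variable {σ : Type*} {α β : Type u}

def genFun (w : α → σ →₀ ℕ) : MvPowerSeries σ ℚ :=
  fun m => (Nat.card {a // w a = m} : ℚ)

def FiniteFibers (w : α → σ →₀ ℕ) : Prop := ∀ m, Finite {a // w a = m}

lemma coeff_genFun (w : α → σ →₀ ℕ) (m : σ →₀ ℕ) :
    coeff m (genFun w) = Nat.card {a // w a = m} := rfl

lemma FiniteFibers.of_injective {w : β → σ →₀ ℕ} (hw : FiniteFibers w) {f : α → β}
    (hf : Function.Injective f) {w' : α → σ →₀ ℕ} (h : ∀ a, w (f a) = w' a) :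
    FiniteFibers w' := fun m =>
  have := hw m
  Finite.of_injective (fun a : {a // w' a = m} => (⟨f a, (h a).trans a.2⟩ : {b // w b = m}))
    fun _ _ h => Subtype.ext (hf (congrArg Subtype.val h))

lemma genFun_congr (e : α ≃ β) {w : α → σ →₀ ℕ} {w' : β → σ →₀ ℕ} (h : ∀ a, w' (e a) = w a) :
    genFun w' = genFun w := by
  ext m
  exact congrArg Nat.cast <| Nat.card_congr <| (e.subtypeEquiv fun a => by rw [h]).symm

lemma genFun_unique [Unique α] (w : α → σ →₀ ℕ) : genFun w = monomial (w default) 1 := by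
  ext m
  rw [coeff_genFun, coeff_monomial]
  split_ifs with h
  · subst h
    have : Unique {a // w a = w default} :=
      ⟨⟨⟨default, rfl⟩⟩, fun x => Subtype.ext (Subsingleton.elim _ _)⟩
    simp
  · have : IsEmpty {a // w a = m} := ⟨fun a => h (by rw [← a.2, Unique.eq_default a.1])⟩
    simp

lemma genFun_sum {w₁ : α → σ →₀ ℕ} {w₂ : β → σ →₀ ℕ} (h : FiniteFibers (Sum.elim w₁ w₂)) :
    genFun (Sum.elim w₁ w₂) = genFun w₁ + genFun w₂ := by
  ext m
  have : Finite {a // w₁ a = m} := h.of_injective Sum.inl_injective (fun _ => rfl) m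
  have : Finite {b // w₂ b = m} := h.of_injective Sum.inr_injective (fun _ => rfl) m
  rw [map_add, coeff_genFun, coeff_genFun, coeff_genFun,
    Nat.card_congr (Equiv.subtypeSum (p := fun x => Sum.elim w₁ w₂ x = m))]
  exact_mod_cast Nat.card_sum (α := {a // w₁ a = m}) (β := {b // w₂ b = m})

lemma genFun_prod {w₁ : α → σ →₀ ℕ} {w₂ : β → σ →₀ ℕ} (h₁ : FiniteFibers w₁)
    (h₂ : FiniteFibers w₂) :
    genFun (fun x : α × β => w₁ x.1 + w₂ x.2) = genFun w₁ * genFun w₂ := by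
  ext m
  have e : {x : α × β // w₁ x.1 + w₂ x.2 = m} ≃
      Σ pq : antidiagonal m, {a // w₁ a = pq.1.1} × {b // w₂ b = pq.1.2} :=
    { toFun x := ⟨⟨(w₁ x.1.1, w₂ x.1.2), mem_antidiagonal.mpr x.2⟩,
        ⟨x.1.1, rfl⟩, ⟨x.1.2, rfl⟩⟩
      invFun y := ⟨(y.2.1, y.2.2), by rw [y.2.1.2, y.2.2.2]; exact mem_antidiagonal.mp y.1.2⟩
      left_inv _ := rfl
      right_inv := by
        rintro ⟨⟨⟨p, q⟩, _⟩, ⟨a, ha⟩, ⟨b, hb⟩⟩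
        dsimp only at ha hb
        subst ha hb
        rfl }
  have (pq : antidiagonal m) : Finite ({a // w₁ a = pq.1.1} × {b // w₂ b = pq.1.2}) :=
    have := h₁ pq.1.1
    have := h₂ pq.1.2
    inferInstance
  rw [coeff_mul, coeff_genFun, Nat.card_congr e, Nat.card_sigma, Nat.cast_sum,
    ← Finset.sum_coe_sort (antidiagonal m)]
  refine Finset.sum_congr rfl fun pq _ => ?_
  push_cast [Nat.card_prod]
  rfl

lemma genFun_const_add (m₀ : σ →₀ ℕ) (w : α → σ →₀ ℕ) :
    genFun (fun a => m₀ + w a) = monomial m₀ 1 * genFun w := by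
  ext m
  rw [coeff_monomial_mul, one_mul, coeff_genFun]
  split_ifs with h
  · exact congrArg Nat.cast <| Nat.card_congr <| Equiv.subtypeEquivRight fun a => by
      rw [eq_tsub_iff_add_eq_of_le h, add_comm]
  · have : IsEmpty {a // m₀ + w a = m} := ⟨fun a => h (a.2 ▸ le_self_add)⟩
    simp

end GenFun

section PermValues

variable {n : ℕ}

lemma pv_of_lt (π : Perm (Fin n)) {i : ℕ} (h : i < n) : pv π i = π ⟨i, h⟩ := dif_pos h

lemma pv_val (π : Perm (Fin n)) (i : Fin n) : pv π i = π i := pv_of_lt π i.2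

lemma pv_lt_s9 (π : Perm (Fin n)) {i : ℕ} (h : i < n) : pv π i < n := by
  rw [pv_of_lt π h]
  exact Fin.is_lt _

lemma pv_injective (π : Perm (Fin n)) {i j : ℕ} (hi : i < n) (hj : j < n)
    (h : pv π i = pv π j) : i = j := by
  rw [pv_of_lt π hi, pv_of_lt π hj, Fin.val_inj, π.apply_eq_iff_eq, Fin.mk.injEq] at h
  exact h

lemma pv_ext {π ρ : Perm (Fin n)} (h : ∀ i < n, pv π i = pv ρ i) : π = ρ :=
  Equiv.ext fun i => Fin.ext <| by rw [← pv_val, ← pv_val, h i i.2]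

lemma pv_one {i : ℕ} (h : i < n) : pv (1 : Perm (Fin n)) i = i := by
  rw [pv_of_lt _ h]
  rfl

lemma isInvolution_iff_pv (π : Perm (Fin n)) :
    IsInvolution π ↔ ∀ i < n, pv π (pv π i) = i := by
  refine ⟨fun h i hi => ?_, fun h x => Fin.ext ?_⟩
  · rw [pv_of_lt π hi, pv_val, h]
  · rw [← pv_val, ← pv_val, h x x.2]

lemma contains3412_iff_pv (π : Perm (Fin n)) :
    Contains3412 π ↔ ∃ i₁ i₂ i₃ i₄ : ℕ, i₁ < i₂ ∧ i₂ < i₃ ∧ i₃ < i₄ ∧ i₄ < n ∧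
      pv π i₃ < pv π i₄ ∧ pv π i₄ < pv π i₁ ∧ pv π i₁ < pv π i₂ := by
  constructor
  · rintro ⟨i₁, i₂, i₃, i₄, h₁, h₂, h₃, h₄, h₅, h₆⟩
    refine ⟨i₁, i₂, i₃, i₄, h₁, h₂, h₃, i₄.2, ?_⟩
    simp only [pv_val]
    exact ⟨h₄, h₅, h₆⟩
  · rintro ⟨i₁, i₂, i₃, i₄, h₁, h₂, h₃, h₄, h₅, h₆, h₇⟩
    refine ⟨⟨i₁, by omega⟩, ⟨i₂, by omega⟩, ⟨i₃, by omega⟩, ⟨i₄, h₄⟩, h₁, h₂, h₃, ?_⟩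
    simp only [Fin.lt_def, ← pv_of_lt]
    exact ⟨h₅, h₆, h₇⟩

lemma invCount_eq_sum (π : Perm (Fin n)) :
    invCount π = ∑ i ∈ range n, ∑ j ∈ range n, if i < j ∧ pv π j < pv π i then 1 else 0 := by
  rw [invCount, card_filter, Fintype.sum_prod_type, ← Fin.sum_univ_eq_sum_range]
  refine Finset.sum_congr rfl fun i _ => ?_
  rw [← Fin.sum_univ_eq_sum_range]
  simp only [Fin.lt_def, pv_val]

lemma desCount_eq_sum (π : Perm (Fin n)) :
    desCount π = ∑ i ∈ range n, if i + 1 < n ∧ pv π (i + 1) < pv π i then 1 else 0 := by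
  rw [desCount, card_filter]
  rcases n with _ | n
  · rfl
  rw [sum_range_succ, if_neg (by omega), add_zero, Nat.add_sub_cancel]
  exact Finset.sum_congr rfl fun i hi => if_congr (by simp [mem_range.mp hi]) rfl rfl

lemma fixCount_eq_sum (π : Perm (Fin n)) :
    fixCount π = ∑ i ∈ range n, if pv π i = i then 1 else 0 := by
  rw [fixCount, card_filter, ← Fin.sum_univ_eq_sum_range]
  simp only [Fin.ext_iff, pv_val]

lemma pv_mul (π ρ : Perm (Fin n)) {i : ℕ} (hi : i < n) : pv (π * ρ) i = pv π (pv ρ i) := by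
  rw [pv_of_lt _ hi, pv_of_lt _ hi, pv_val]
  rfl

end PermValues

section BlockSum

variable {a b : ℕ}

def blockSum (σ : Perm (Fin a)) (τ : Perm (Fin b)) : Perm (Fin (a + b)) :=
  finSumFinEquiv.permCongr (σ.sumCongr τ)

variable (σ : Perm (Fin a)) (τ : Perm (Fin b))

lemma pv_blockSum_left {i : ℕ} (hi : i < a) : pv (blockSum σ τ) i = pv σ i := by
  have : (⟨i, by omega⟩ : Fin (a + b)) = Fin.castAdd b ⟨i, hi⟩ := rfl
  rw [pv_of_lt _ (by omega), pv_of_lt _ hi, this, blockSum, permCongr_apply,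
    finSumFinEquiv_symm_apply_castAdd]
  rfl

lemma pv_blockSum_right {j : ℕ} (hj : j < b) : pv (blockSum σ τ) (a + j) = a + pv τ j := by
  have : (⟨a + j, by omega⟩ : Fin (a + b)) = Fin.natAdd a ⟨j, hj⟩ := rfl
  rw [pv_of_lt _ (by omega), pv_of_lt _ hj, this, blockSum, permCongr_apply,
    finSumFinEquiv_symm_apply_natAdd]
  rfl

lemma blockSum_inj {σ' : Perm (Fin a)} {τ' : Perm (Fin b)} :
    blockSum σ τ = blockSum σ' τ' ↔ σ = σ' ∧ τ = τ' := by
  refine ⟨fun h => ⟨pv_ext fun i hi => ?_, pv_ext fun j hj => ?_⟩, fun h => by rw [h.1, h.2]⟩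
  · rw [← pv_blockSum_left σ τ hi, h, pv_blockSum_left _ _ hi]
  · have := congrArg (pv · (a + j)) h
    simp only [pv_blockSum_right _ _ hj] at this
    omega

lemma exists_blockSum_eq (π : Perm (Fin (a + b))) (h : ∀ i < a, pv π i < a) :
    ∃ σ τ, blockSum σ τ = π := by
  set ρ := finSumFinEquiv.symm.permCongr π
  have hρ : Set.MapsTo ρ (Set.range Sum.inl) (Set.range Sum.inl) := by
    rintro _ ⟨i, rfl⟩
    have hi : (π (Fin.castAdd b i) : ℕ) < a := by
      rw [← pv_val]
      exact h i i.2
    refine ⟨⟨_, hi⟩, ?_⟩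
    rw [permCongr_apply, symm_symm, finSumFinEquiv_apply_left, ← finSumFinEquiv_symm_apply_castAdd]
    rfl
  obtain ⟨⟨σ, τ⟩, hστ⟩ := Perm.mem_sumCongrHom_range_of_perm_mapsTo_inl hρ
  refine ⟨σ, τ, Equiv.ext fun x => ?_⟩
  rw [blockSum, show σ.sumCongr τ = ρ from hστ]
  simp [ρ]

@[simp] lemma blockSum_castAdd (i : Fin a) :
    blockSum σ τ (Fin.castAdd b i) = Fin.castAdd b (σ i) := by
  simp [blockSum]

@[simp] lemma blockSum_natAdd (j : Fin b) :
    blockSum σ τ (Fin.natAdd a j) = Fin.natAdd a (τ j) := by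
  simp [blockSum]

lemma invCount_blockSum : invCount (blockSum σ τ) = invCount σ + invCount τ := by
  simp only [invCount, card_filter, Fintype.sum_prod_type, Fin.sum_univ_add, blockSum_castAdd,
    blockSum_natAdd, Fin.lt_def, Fin.val_castAdd, Fin.val_natAdd, add_lt_add_iff_left,
    sum_add_distrib]
  have h₁ (i : Fin a) (j : Fin b) : ¬ (i < a + j ∧ a + τ j < (σ i : ℕ)) := by
    have := (σ i).isLt
    omega
  have h₂ (i : Fin b) (j : Fin a) : ¬ (a + i < (j : ℕ) ∧ σ j < a + (τ i : ℕ)) := by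
    have := j.isLt
    omega
  simp [h₁, h₂]

lemma fixCount_blockSum : fixCount (blockSum σ τ) = fixCount σ + fixCount τ := by
  simp only [fixCount, card_filter, Fin.sum_univ_add, blockSum_castAdd, blockSum_natAdd,
    Fin.castAdd_inj, Fin.natAdd_inj]

lemma isInvolution_blockSum :
    IsInvolution (blockSum σ τ) ↔ IsInvolution σ ∧ IsInvolution τ := by
  simp [IsInvolution, Fin.forall_fin_add]

lemma desCount_blockSum : desCount (blockSum σ τ) = desCount σ + desCount τ := by
  rw [desCount_eq_sum, desCount_eq_sum σ, desCount_eq_sum τ, sum_range_add]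
  congr 1
  · refine sum_congr rfl fun i hi => if_congr ?_ rfl rfl
    have hi := mem_range.mp hi
    have := pv_lt_s9 σ hi
    rw [pv_blockSum_left σ τ hi]
    obtain h | h := lt_or_ge (i + 1) a
    · rw [pv_blockSum_left σ τ h]
      omega
    obtain hb | hb := Nat.eq_zero_or_pos b
    · omega
    rw [show i + 1 = a + 0 by omega, pv_blockSum_right σ τ hb]
    omega
  · refine sum_congr rfl fun j hj => if_congr ?_ rfl rfl
    have hj := mem_range.mp hj
    rw [pv_blockSum_right σ τ hj]
    obtain h | h := lt_or_ge (j + 1) b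
    · rw [add_assoc, pv_blockSum_right σ τ h]
      omega
    · omega

lemma contains3412_blockSum :
    Contains3412 (blockSum σ τ) ↔ Contains3412 σ ∨ Contains3412 τ := by
  simp only [contains3412_iff_pv]
  constructor
  · rintro ⟨i₁, i₂, i₃, i₄, h₁₂, h₂₃, h₃₄, h₄, h⟩
    by_cases h₄a : i₄ < a
    · rw [pv_blockSum_left σ τ (by omega : i₁ < a), pv_blockSum_left σ τ (by omega : i₂ < a),
        pv_blockSum_left σ τ (by omega : i₃ < a), pv_blockSum_left σ τ h₄a] at h
      exact .inl ⟨i₁, i₂, i₃, i₄, h₁₂, h₂₃, h₃₄, h₄a, h⟩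
    obtain ⟨j₄, rfl⟩ := Nat.exists_eq_add_of_le (not_lt.mp h₄a)
    by_cases h₁a : i₁ < a
    · rw [pv_blockSum_left σ τ h₁a, pv_blockSum_right σ τ (by omega)] at h
      have := pv_lt_s9 σ h₁a
      omega
    obtain ⟨j₁, rfl⟩ := Nat.exists_eq_add_of_le (not_lt.mp h₁a)
    obtain ⟨j₂, rfl⟩ := Nat.exists_eq_add_of_le (by omega : a ≤ i₂)
    obtain ⟨j₃, rfl⟩ := Nat.exists_eq_add_of_le (by omega : a ≤ i₃)
    rw [pv_blockSum_right σ τ (by omega : j₁ < b), pv_blockSum_right σ τ (by omega : j₂ < b),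
      pv_blockSum_right σ τ (by omega : j₃ < b), pv_blockSum_right σ τ (by omega : j₄ < b)] at h
    exact .inr ⟨j₁, j₂, j₃, j₄, by omega, by omega, by omega, by omega, by omega, by omega,
      by omega⟩
  · rintro (⟨i₁, i₂, i₃, i₄, h₁₂, h₂₃, h₃₄, h₄, h⟩ | ⟨i₁, i₂, i₃, i₄, h₁₂, h₂₃, h₃₄, h₄, h⟩)
    · refine ⟨i₁, i₂, i₃, i₄, h₁₂, h₂₃, h₃₄, by omega, ?_⟩
      rwa [pv_blockSum_left σ τ (by omega : i₁ < a), pv_blockSum_left σ τ (by omega : i₂ < a),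
        pv_blockSum_left σ τ (by omega : i₃ < a), pv_blockSum_left σ τ h₄]
    · refine ⟨a + i₁, a + i₂, a + i₃, a + i₄, by omega, by omega, by omega, by omega, ?_⟩
      rw [pv_blockSum_right σ τ (by omega : i₁ < b), pv_blockSum_right σ τ (by omega : i₂ < b),
        pv_blockSum_right σ τ (by omega : i₃ < b), pv_blockSum_right σ τ h₄]
      omega

end BlockSum

section Wrap

variable {a : ℕ}

-- The 2-cycle `(0, a + 1)` with `σ` shifted into the positions `1, …, a` in between.
def wrap (σ : Perm (Fin a)) : Perm (Fin (1 + a + 1)) :=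
  swap 0 (Fin.last _) * blockSum (blockSum 1 σ) 1

lemma pv_swap_zero_last {i : ℕ} (hi : i < 1 + a + 1) :
    pv (swap (0 : Fin (1 + a + 1)) (Fin.last _)) i =
      if i = 0 then 1 + a else if i = 1 + a then 0 else i := by
  rw [pv_of_lt _ hi, swap_apply_def]
  split_ifs <;> simp_all [Fin.ext_iff]

lemma Fin.sum_univ_one_add_add_one {M : Type*} [AddCommMonoid M] (f : Fin (1 + a + 1) → M) :
    ∑ i, f i = f 0 + ∑ i : Fin a, f (Fin.natAdd 1 i).castSucc + f (Fin.last _) := by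
  rw [Fin.sum_univ_castSucc, Fin.sum_univ_add, Fin.sum_univ_one]
  rfl

lemma Fin.forall_one_add_add_one {P : Fin (1 + a + 1) → Prop} :
    (∀ i, P i) ↔ P 0 ∧ (∀ i : Fin a, P (Fin.natAdd 1 i).castSucc) ∧ P (Fin.last _) := by
  rw [Fin.forall_fin_succ', Fin.forall_fin_add, Fin.forall_fin_one, and_assoc]
  rfl

lemma exists_wrap_eq (π : Perm (Fin (1 + a + 1))) (h₀ : pv π 0 = 1 + a)
    (hlast : pv π (1 + a) = 0) : ∃ σ, wrap σ = π := by
  set ρ := swap 0 (Fin.last _) * π with hρ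
  have hρ₀ : pv ρ 0 = 0 := by
    rw [pv_mul _ _ (by omega), h₀, pv_swap_zero_last (by omega), if_neg (by omega), if_pos rfl]
  have hρlast : pv ρ (1 + a) = 1 + a := by
    rw [pv_mul _ _ (by omega), hlast, pv_swap_zero_last (by omega), if_pos rfl]
  obtain ⟨ρ₁, ρ₂, hρ₁₂⟩ := exists_blockSum_eq ρ fun i hi => by
    have := pv_lt_s9 ρ (i := i) (by omega)
    have : pv ρ i ≠ 1 + a := fun h => by
      have := pv_injective ρ (by omega) (by omega) (h.trans hρlast.symm)
      omega
    omega
  obtain ⟨ρ₀, σ, rfl⟩ := exists_blockSum_eq ρ₁ fun i hi => by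
    rw [Nat.lt_one_iff.mp hi, ← pv_blockSum_left ρ₁ ρ₂ (by omega), hρ₁₂, hρ₀]
    exact Nat.one_pos
  refine ⟨σ, ?_⟩
  rw [Subsingleton.elim ρ₀ 1, Subsingleton.elim ρ₂ 1] at hρ₁₂
  rw [wrap, hρ₁₂, hρ, swap_mul_self_mul]

variable (σ : Perm (Fin a))

lemma pv_wrap_zero : pv (wrap σ) 0 = 1 + a := by
  rw [wrap, pv_mul _ _ (by omega), pv_blockSum_left _ _ (by omega),
    pv_blockSum_left _ _ (by omega), pv_one (by omega), pv_swap_zero_last (by omega), if_pos rfl]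

lemma pv_wrap_one_add {i : ℕ} (hi : i < a) : pv (wrap σ) (1 + i) = 1 + pv σ i := by
  have := pv_lt_s9 σ hi
  rw [wrap, pv_mul _ _ (by omega), pv_blockSum_left _ _ (by omega), pv_blockSum_right _ _ hi,
    pv_swap_zero_last (by omega), if_neg (by omega), if_neg (by omega)]

lemma pv_wrap_last : pv (wrap σ) (1 + a) = 0 := by
  have h := pv_blockSum_right (blockSum (1 : Perm (Fin 1)) σ) (1 : Perm (Fin 1)) (j := 0)
    Nat.one_pos
  rw [add_zero, pv_one Nat.one_pos, add_zero] at h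
  rw [wrap, pv_mul _ _ (by omega), h, pv_swap_zero_last (by omega), if_neg (by omega), if_pos rfl]

@[simp] lemma wrap_zero : wrap σ 0 = Fin.last _ :=
  Fin.ext <| by rw [← pv_val, Fin.val_zero, pv_wrap_zero, Fin.val_last]

@[simp] lemma wrap_last : wrap σ (Fin.last _) = 0 :=
  Fin.ext <| by rw [← pv_val, Fin.val_last, pv_wrap_last, Fin.val_zero]

@[simp] lemma wrap_castSucc_natAdd (i : Fin a) :
    wrap σ (Fin.natAdd 1 i).castSucc = (Fin.natAdd 1 (σ i)).castSucc :=
  Fin.ext <| by simp only [← pv_val, Fin.val_castSucc, Fin.val_natAdd, pv_wrap_one_add σ i.2]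

lemma invCount_wrap : invCount (wrap σ) = invCount σ + 2 * a + 1 := by
  simp only [invCount, card_filter, Fintype.sum_prod_type, Fin.sum_univ_one_add_add_one,
    wrap_zero, wrap_last, wrap_castSucc_natAdd, Fin.lt_def, Fin.val_castSucc, Fin.val_natAdd,
    Fin.val_zero, Fin.val_last]
  simp [sum_add_distrib]
  ring

lemma fixCount_wrap : fixCount (wrap σ) = fixCount σ := by
  simp only [fixCount, card_filter, Fin.sum_univ_one_add_add_one, wrap_zero, wrap_last,
    wrap_castSucc_natAdd, Fin.ext_iff, Fin.val_castSucc, Fin.val_natAdd, Fin.val_zero,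
    Fin.val_last]
  simp
  omega

lemma isInvolution_wrap : IsInvolution (wrap σ) ↔ IsInvolution σ := by
  simp only [IsInvolution, Fin.forall_one_add_add_one, wrap_zero, wrap_last,
    wrap_castSucc_natAdd, Fin.castSucc_inj, Fin.natAdd_inj, true_and, and_true]

lemma desCount_wrap : desCount (wrap σ) = desCount σ + if a = 0 then 1 else 2 := by
  rw [desCount_eq_sum, desCount_eq_sum σ, sum_range_succ, sum_range_add, sum_range_one,
    if_neg (c := 1 + a + 1 < 1 + a + 1 ∧ _) (by omega), add_zero]
  obtain rfl | ⟨a, rfl⟩ : a = 0 ∨ ∃ a', a = a' + 1 := by rcases a with _ | a <;> simp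
  · simpa [pv_wrap_zero] using pv_wrap_last σ
  have h₀ : pv (wrap σ) (0 + 1) < pv (wrap σ) 0 := by
    have := pv_lt_s9 σ (i := 0) (by omega)
    rw [pv_wrap_zero, add_comm 0, pv_wrap_one_add σ (by omega)]
    omega
  have h₁ : pv (wrap σ) (1 + a + 1) < pv (wrap σ) (1 + a) := by
    rw [show 1 + a + 1 = 1 + (a + 1) by omega, pv_wrap_last, pv_wrap_one_add σ (by omega)]
    omega
  rw [if_pos ⟨by omega, h₀⟩, sum_range_succ, sum_range_succ, if_pos ⟨by omega, h₁⟩,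
    if_neg (by omega), add_zero, if_neg (by omega)]
  have hmid : ∀ j ∈ range a,
      (if 1 + j + 1 < 1 + (a + 1) + 1 ∧ pv (wrap σ) (1 + j + 1) < pv (wrap σ) (1 + j)
        then 1 else 0) = if j + 1 < a + 1 ∧ pv σ (j + 1) < pv σ j then 1 else 0 := by
    intro j hj
    have hj := mem_range.mp hj
    rw [add_assoc, pv_wrap_one_add σ (by omega), pv_wrap_one_add σ (by omega)]
    exact if_congr (by omega) rfl rfl
  rw [sum_congr rfl hmid]
  omega

lemma contains3412_wrap : Contains3412 (wrap σ) ↔ Contains3412 σ := by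
  simp only [contains3412_iff_pv]
  constructor
  · rintro ⟨i₁, i₂, i₃, i₄, h₁₂, h₂₃, h₃₄, h₄, h⟩
    obtain rfl | hi₁ := Nat.eq_zero_or_pos i₁
    · have := pv_lt_s9 (wrap σ) (i := i₂) (by omega)
      rw [pv_wrap_zero] at h
      omega
    obtain h₄a | rfl : i₄ < 1 + a ∨ i₄ = 1 + a := by omega
    · obtain ⟨j₁, rfl⟩ := Nat.exists_eq_add_of_le hi₁
      obtain ⟨j₂, rfl⟩ := Nat.exists_eq_add_of_le (by omega : 1 ≤ i₂)
      obtain ⟨j₃, rfl⟩ := Nat.exists_eq_add_of_le (by omega : 1 ≤ i₃)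
      obtain ⟨j₄, rfl⟩ := Nat.exists_eq_add_of_le (by omega : 1 ≤ i₄)
      rw [pv_wrap_one_add σ (by omega : j₁ < a), pv_wrap_one_add σ (by omega : j₂ < a),
        pv_wrap_one_add σ (by omega : j₃ < a), pv_wrap_one_add σ (by omega : j₄ < a)] at h
      exact ⟨j₁, j₂, j₃, j₄, by omega, by omega, by omega, by omega, by omega, by omega,
        by omega⟩
    · rw [pv_wrap_last] at h
      omega
  · rintro ⟨i₁, i₂, i₃, i₄, h₁₂, h₂₃, h₃₄, h₄, h⟩
    refine ⟨1 + i₁, 1 + i₂, 1 + i₃, 1 + i₄, by omega, by omega, by omega, by omega, ?_⟩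
    rw [pv_wrap_one_add σ (by omega : i₁ < a), pv_wrap_one_add σ (by omega : i₂ < a),
      pv_wrap_one_add σ (by omega : i₃ < a), pv_wrap_one_add σ h₄]
    omega

lemma wrap_inj {σ' : Perm (Fin a)} : wrap σ = wrap σ' ↔ σ = σ' := by
  refine ⟨fun h => pv_ext fun i hi => ?_, fun h => h ▸ rfl⟩
  have := congrArg (pv · (1 + i)) h
  simp only [pv_wrap_one_add _ hi] at this
  omega

end Wrap

lemma pv_lt_pv_zero_add_one_of_lt {n : ℕ} {π : Perm (Fin n)} (hI : IsInvolution π)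
    (hA : ¬ Contains3412 π) {i : ℕ} (hi : i < pv π 0 + 1) : pv π i < pv π 0 + 1 := by
  rw [isInvolution_iff_pv] at hI
  rw [contains3412_iff_pv] at hA
  obtain rfl | hi₀ := Nat.eq_zero_or_pos i
  · omega
  have hn : 0 < n := by
    by_contra hn
    simp [pv, show n = 0 by omega] at hi
    omega
  have hk := pv_lt_s9 π hn
  obtain rfl | hik := eq_or_lt_of_le (Nat.le_of_lt_succ hi)
  · rw [hI 0 hn]
    omega
  by_contra hbig
  have hπi := pv_lt_s9 π (i := i) (by omega)
  exact hA ⟨0, i, pv π 0, pv π i, hi₀, hik, by omega, hπi,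
    by rw [hI 0 hn, hI i (by omega)]; omega, by rw [hI i (by omega)]; exact hik, by omega⟩

def exps (a b c d : ℕ) : Fin 4 →₀ ℕ := Finsupp.equivFunOnFinite.symm ![a, b, c, d]

lemma exps_add (a b c d a' b' c' d' : ℕ) :
    exps a b c d + exps a' b' c' d' = exps (a + a') (b + b') (c + c') (d + d') := by
  ext i
  fin_cases i <;> rfl

lemma exps_eq_iff {a b c d : ℕ} {m : Fin 4 →₀ ℕ} :
    exps a b c d = m ↔ a = m 0 ∧ b = m 1 ∧ c = m 2 ∧ d = m 3 := by
  refine ⟨fun h => h ▸ ⟨rfl, rfl, rfl, rfl⟩, fun ⟨ha, hb, hc, hd⟩ => ?_⟩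
  ext i
  fin_cases i <;> assumption

lemma exps_zero : exps 0 0 0 0 = 0 := by
  ext i
  fin_cases i <;> rfl

lemma monomial_exps (a b c d : ℕ) :
    monomial (exps a b c d) (1 : ℚ) = X 0 ^ a * X 1 ^ b * X 2 ^ c * X 3 ^ d := by
  have : exps a b c d = Finsupp.single 0 a + Finsupp.single 1 b + Finsupp.single 2 c
      + Finsupp.single 3 d := by
    ext i
    fin_cases i <;> simp [exps]
  simp only [this, X_pow_eq, monomial_mul_monomial, mul_one]

def permWeight (n : ℕ) (π : Perm (Fin n)) : Fin 4 →₀ ℕ :=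
  exps n (invCount π) (desCount π) (fixCount π)

def permWeightSub (n : ℕ) (π : Perm (Fin n)) : Fin 4 →₀ ℕ :=
  exps n (invCount π + 2 * n) (desCount π) (fixCount π)

structure Inv3412 where
  n : ℕ
  perm : Perm (Fin n)
  isInvolution : IsInvolution perm
  not_contains3412 : ¬ Contains3412 perm

namespace Inv3412

def empty : Inv3412 := ⟨0, 1, fun _ => rfl, fun ⟨i, _⟩ => i.elim0⟩

def point : Inv3412 := ⟨1, 1, fun _ => rfl, fun ⟨_, _, _, _, h, _⟩ => by omega⟩

instance : Unique {x : Inv3412 // x.n = 0} where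
  default := ⟨empty, rfl⟩
  uniq := by
    rintro ⟨⟨n, π, _, _⟩, rfl : n = 0⟩
    obtain rfl := Subsingleton.elim π 1
    rfl

def blockSum (x y : Inv3412) : Inv3412 where
  n := x.n + y.n
  perm := _root_.blockSum x.perm y.perm
  isInvolution := (isInvolution_blockSum _ _).2 ⟨x.isInvolution, y.isInvolution⟩
  not_contains3412 := by
    rw [contains3412_blockSum, not_or]
    exact ⟨x.not_contains3412, y.not_contains3412⟩

def wrap (x : Inv3412) : Inv3412 where
  n := 1 + x.n + 1
  perm := _root_.wrap x.perm
  isInvolution := (isInvolution_wrap _).2 x.isInvolution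
  not_contains3412 := by
    rw [contains3412_wrap]
    exact x.not_contains3412

lemma blockSum_inj {x y x' y' : Inv3412} (h : x.blockSum y = x'.blockSum y') (hn : x.n = x'.n) :
    x = x' ∧ y = y' := by
  obtain ⟨a, σ, _, _⟩ := x
  obtain ⟨b, τ, _, _⟩ := y
  obtain ⟨a', σ', _, _⟩ := x'
  obtain ⟨b', τ', _, _⟩ := y'
  obtain rfl : a = a' := hn
  obtain ⟨hb, hστ⟩ := mk.inj h
  obtain rfl : b = b' := by simpa using hb
  obtain ⟨rfl, rfl⟩ := (_root_.blockSum_inj σ τ).1 (eq_of_heq hστ)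
  exact ⟨rfl, rfl⟩

lemma wrap_injective : Function.Injective wrap := by
  rintro ⟨a, σ, _, _⟩ ⟨a', σ', _, _⟩ h
  obtain ⟨ha, hσ⟩ := mk.inj h
  obtain rfl : a = a' := by simpa using ha
  obtain rfl := (_root_.wrap_inj _).1 (eq_of_heq hσ)
  rfl

lemma exists_blockSum_eq (x : Inv3412) (hx : x.n ≠ 0) :
    ∃ β y : Inv3412, pv β.perm 0 + 1 = β.n ∧ β.blockSum y = x := by
  obtain ⟨n, π, hI, hA⟩ := x
  generalize hk : pv π 0 = k
  have hkn : k < n := hk ▸ pv_lt_s9 π (Nat.pos_of_ne_zero hx)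
  obtain ⟨b, rfl⟩ : ∃ b, n = k + 1 + b := ⟨n - (k + 1), by omega⟩
  obtain ⟨σ, τ, rfl⟩ := _root_.exists_blockSum_eq π fun i hi => by
    have := pv_lt_pv_zero_add_one_of_lt hI hA (i := i)
    rw [hk] at this
    exact this hi
  rw [isInvolution_blockSum] at hI
  rw [contains3412_blockSum, not_or] at hA
  refine ⟨⟨k + 1, σ, hI.1, hA.1⟩, ⟨b, τ, hI.2, hA.2⟩, ?_, rfl⟩
  rw [← pv_blockSum_left σ τ (by omega), hk]

lemma exists_wrap_eq (x : Inv3412) (hx : pv x.perm 0 + 1 = x.n) (h1 : x.n ≠ 1) :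
    ∃ y : Inv3412, y.wrap = x := by
  obtain ⟨n, π, hI, hA⟩ := x
  obtain ⟨a, rfl⟩ : ∃ a, n = 1 + a + 1 := ⟨n - 2, by dsimp only at hx h1; omega⟩
  have h₀ : pv π 0 = 1 + a := by dsimp only at hx; omega
  have hlast : pv π (1 + a) = 0 := by
    have := (isInvolution_iff_pv π).1 hI 0 (by omega)
    rwa [h₀] at this
  obtain ⟨σ, rfl⟩ := _root_.exists_wrap_eq π h₀ hlast
  exact ⟨⟨a, σ, (isInvolution_wrap σ).1 hI, (contains3412_wrap σ).not.1 hA⟩, rfl⟩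

lemma eq_point {x : Inv3412} (hx : x.n = 1) : x = point := by
  obtain ⟨n, π, _, _⟩ := x
  obtain rfl : n = 1 := hx
  obtain rfl := Subsingleton.elim π 1
  rfl

section Fibers

variable (f : (n : ℕ) → Perm (Fin n) → Fin 4 →₀ ℕ)

def fiberEquiv (hf : ∀ n π, f n π 0 = n) (m : Fin 4 →₀ ℕ) :
    {x : Inv3412 // f x.n x.perm = m} ≃
      {π : Perm (Fin (m 0)) // IsInvolution π ∧ ¬ Contains3412 π ∧ f (m 0) π = m} :=
  .symm <| .ofBijective (fun π => ⟨⟨m 0, π.1, π.2.1, π.2.2.1⟩, π.2.2.2⟩) <| by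
    refine ⟨fun π π' h => Subtype.ext (eq_of_heq (mk.inj (congrArg Subtype.val h)).2), ?_⟩
    rintro ⟨⟨n, π, hI, hA⟩, hm⟩
    obtain rfl : n = m 0 := by rw [← hm, hf]
    exact ⟨⟨π, hI, hA, hm⟩, rfl⟩

lemma finiteFibers (hf : ∀ n π, f n π 0 = n) : FiniteFibers fun x : Inv3412 => f x.n x.perm :=
  fun m => Finite.of_equiv _ (fiberEquiv f hf m).symm

lemma genFun_eq_one_add (hf : ∀ n π, f n π 0 = n) (h₀ : f 0 1 = 0) :
    genFun (fun x : Inv3412 => f x.n x.perm)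
      = 1 + genFun fun x : {x : Inv3412 // x.n ≠ 0} => f x.1.n x.1.perm := by
  rw [genFun_congr (Equiv.sumCompl fun x : Inv3412 => x.n = 0)
    (w := Sum.elim (fun x => f x.1.n x.1.perm) (fun x => f x.1.n x.1.perm))
    (by rintro (x | x) <;> rfl), genFun_sum, genFun_unique]
  · exact congrArg (· + _) ((congrArg (monomial · (1 : ℚ)) h₀).trans monomial_zero_one)
  · exact (finiteFibers f hf).of_injective (Equiv.sumCompl _).injective
      (by rintro (x | x) <;> rfl)

end Fibers

abbrev weight (x : Inv3412) : Fin 4 →₀ ℕ := permWeight x.n x.perm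

abbrev weightSub (x : Inv3412) : Fin 4 →₀ ℕ := permWeightSub x.n x.perm

abbrev Pos : Type := {x : Inv3412 // x.n ≠ 0}

abbrev Block : Type := {x : Inv3412 // pv x.perm 0 + 1 = x.n}

lemma weight_blockSum (x y : Inv3412) : (x.blockSum y).weight = x.weight + y.weight := by
  simp only [weight, permWeight, exps_add, blockSum, invCount_blockSum, desCount_blockSum,
    fixCount_blockSum]

lemma weight_wrap (x : Inv3412) (hx : x.n ≠ 0) : x.wrap.weight = exps 2 1 2 0 + x.weightSub := by
  simp only [weight, weightSub, permWeight, permWeightSub, exps_add, wrap, invCount_wrap,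
    desCount_wrap, fixCount_wrap, if_neg hx]
  congr 1 <;> omega

lemma weight_point : point.weight = exps 1 0 0 1 := by
  simp only [weight, permWeight, point, invCount_eq_sum, desCount_eq_sum, fixCount_eq_sum,
    sum_range_one, lt_irrefl, false_and, if_false, pv_one Nat.one_pos, if_true]

lemma weight_empty : empty.weight = 0 := by
  simp [weight, permWeight, empty, invCount_eq_sum, desCount_eq_sum, fixCount_eq_sum, exps_zero]

lemma weightSub_empty : empty.weightSub = 0 := by
  simp [weightSub, permWeightSub, empty, invCount_eq_sum, desCount_eq_sum, fixCount_eq_sum,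
    exps_zero]

lemma weight_wrap_empty : empty.wrap.weight = exps 2 1 1 0 := by
  simp only [weight, permWeight, wrap, invCount_wrap, desCount_wrap, fixCount_wrap, empty]
  simp [invCount_eq_sum, desCount_eq_sum, fixCount_eq_sum]

lemma genFun_weight : genFun weight = Finv := by
  ext m
  change _ = ((Set.ncard _ : ℕ) : ℚ)
  rw [coeff_genFun, Nat.card_congr (fiberEquiv permWeight (fun _ _ => rfl) m),
    ← Nat.card_coe_set_eq]
  refine congrArg Nat.cast (Nat.card_congr (Equiv.subtypeEquivRight fun π => ?_))
  simp only [permWeight, exps_eq_iff, true_and]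
  rfl

lemma genFun_weightSub : genFun weightSub = FinvSub := by
  ext m
  change _ = ((Set.ncard _ : ℕ) : ℚ)
  rw [coeff_genFun, Nat.card_congr (fiberEquiv permWeightSub (fun _ _ => rfl) m),
    ← Nat.card_coe_set_eq]
  refine congrArg Nat.cast (Nat.card_congr (Equiv.subtypeEquivRight fun π => ?_))
  simp only [permWeightSub, exps_eq_iff, true_and]
  rfl

lemma genFun_weight_eq_one_add : genFun weight = 1 + genFun fun x : Pos => x.1.weight :=
  genFun_eq_one_add permWeight (fun _ _ => rfl) weight_empty

lemma genFun_weightSub_eq_one_add : genFun weightSub = 1 + genFun fun x : Pos => x.1.weightSub :=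
  genFun_eq_one_add permWeightSub (fun _ _ => rfl) weightSub_empty

lemma blockSum_ne_zero (β : Block) (y : Inv3412) : (β.1.blockSum y).n ≠ 0 := by
  have := β.2
  simp only [blockSum]
  omega

lemma bijective_blockSum :
    Function.Bijective fun p : Block × Inv3412 =>
      (⟨p.1.1.blockSum p.2, blockSum_ne_zero _ _⟩ : Pos) := by
  refine ⟨?_, fun x => ?_⟩
  · rintro ⟨⟨β, hβ⟩, y⟩ ⟨⟨β', hβ'⟩, y'⟩ h
    dsimp only at h
    have h := Subtype.mk.inj h
    have hhead := congrArg (fun x : Inv3412 => pv x.perm 0) h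
    simp only [blockSum, pv_blockSum_left _ _ (show 0 < β.n by omega),
      pv_blockSum_left _ _ (show 0 < β'.n by omega)] at hhead
    obtain ⟨rfl, rfl⟩ := blockSum_inj h (by omega)
    rfl
  · obtain ⟨β, y, hβ, hx⟩ := exists_blockSum_eq x.1 x.2
    exact ⟨(⟨β, hβ⟩, y), Subtype.ext hx⟩

def mkBlock : Unit ⊕ (Unit ⊕ Pos) → Block :=
  Sum.elim (fun _ => ⟨point, congrArg (· + 1) (pv_one Nat.one_pos)⟩) <|
    Sum.elim (fun _ => ⟨empty.wrap, congrArg (· + 1) (pv_wrap_zero _)⟩)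
      fun x => ⟨x.1.wrap, congrArg (· + 1) (pv_wrap_zero _)⟩

lemma bijective_mkBlock : Function.Bijective mkBlock := by
  refine ⟨?_, ?_⟩
  · rintro (_ | _ | ⟨x, hx⟩) (_ | _ | ⟨y, hy⟩) h <;>
      have hn := congrArg (fun β : Block => β.1.n) h <;>
      simp only [mkBlock, Sum.elim_inl, Sum.elim_inr, point, empty, wrap] at hn <;>
      first | rfl | omega | skip
    obtain rfl := wrap_injective (Subtype.mk.inj h)
    rfl
  · rintro ⟨x, hx⟩
    by_cases h1 : x.n = 1
    · exact ⟨.inl (), Subtype.ext (eq_point h1).symm⟩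
    obtain ⟨y, rfl⟩ := exists_wrap_eq x hx h1
    by_cases hy : y.n = 0
    · obtain rfl : y = empty :=
        congrArg Subtype.val (Subsingleton.elim (⟨y, hy⟩ : {x : Inv3412 // x.n = 0}) ⟨empty, rfl⟩)
      exact ⟨.inr (.inl ()), rfl⟩
    · exact ⟨.inr (.inr ⟨y, hy⟩), rfl⟩

lemma weight_mkBlock (z : Unit ⊕ (Unit ⊕ Pos)) :
    (mkBlock z).1.weight = Sum.elim (fun _ => exps 1 0 0 1)
      (Sum.elim (fun _ => exps 2 1 1 0) fun x : Pos => exps 2 1 2 0 + x.1.weightSub) z := by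
  rcases z with _ | _ | ⟨x, hx⟩
  · exact weight_point
  · exact weight_wrap_empty
  · exact weight_wrap x hx

lemma finiteFibers_block : FiniteFibers fun β : Block => β.1.weight :=
  (finiteFibers permWeight fun _ _ => rfl).of_injective Subtype.val_injective fun _ => rfl

lemma genFun_block : genFun (fun β : Block => β.1.weight) = monomial (exps 1 0 0 1) 1
    + (monomial (exps 2 1 1 0) 1 + monomial (exps 2 1 2 0) 1 * (FinvSub - 1)) := by
  have hfin := finiteFibers_block.of_injective bijective_mkBlock.1 weight_mkBlock
  rw [genFun_congr (.ofBijective _ bijective_mkBlock) weight_mkBlock, genFun_sum hfin,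
    genFun_sum (hfin.of_injective Sum.inr_injective fun _ => rfl), genFun_unique, genFun_unique,
    genFun_const_add, ← genFun_weightSub, genFun_weightSub_eq_one_add, add_sub_cancel_left]

lemma genFun_pos :
    genFun (fun x : Pos => x.1.weight) = genFun (fun β : Block => β.1.weight) * Finv := by
  rw [genFun_congr (.ofBijective _ bijective_blockSum)
    (w := fun p : Block × Inv3412 => p.1.1.weight + p.2.weight) fun p => weight_blockSum _ _,
    genFun_prod finiteFibers_block (finiteFibers permWeight fun _ _ => rfl), genFun_weight]

end Inv3412

end

open MvPowerSeries in
/-- `F = 1 + xw·F + x²yz·F + x²yz²·(F(xy²,y,z,w) − 1)·F`. -/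
theorem Finv_functional_equation :
    Finv = 1 + (X 0) * (X 3) * Finv + (X 0) ^ 2 * (X 1) * (X 2) * Finv +
      (X 0) ^ 2 * (X 1) * (X 2) ^ 2 * (FinvSub - 1) * Finv := by
  have h := Inv3412.genFun_weight_eq_one_add
  rw [Inv3412.genFun_weight, Inv3412.genFun_pos, Inv3412.genFun_block, monomial_exps,
    monomial_exps, monomial_exps] at h
  linear_combination h
end
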